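/- arXiv:2502.19069 — 10 statements merged into one kernel-verified Lean document; each statement's English description precedes it below -/
import Mathlib

section
/- For every natural number n there exist polynomials φ and ψ with integer coefficients, each of degree n, such that for every real x one has exp(x)·φ(x) − ψ(x) = Σ_{k=0}^{∞} ((n+k)!/(k!·(2n+1+k)!))·x^{2n+1+k}, and for every real x ≠ 0 the n-th derivative of the function t ↦ (exp(t) − Σ_{j=0}^{n} t^j/j!)/t^{n+1} at x equals (exp(x)·φ(x) − ψ(x))/x^{2n+1}. -/
/-!
With `φᵢ = (n!/i!)·binom(-n-1, n-i)`, the Cauchy product of `φ` with the exponential series has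
`m`-th coefficient `(n!/m!)·∑ᵢ binom(m, i)·binom(-n-1, n-i) = (n!/m!)·binom(m-n-1, n)` by
Chu–Vandermonde. This generalized binomial vanishes for `n < m ≤ 2n`, so `eˣφ(x)` minus its
truncation `ψ` at degree `n` starts at `x^(2n+1)`, with coefficient `(n+k)!/(k!(2n+1+k)!)` at
`x^(2n+1+k)`. On the other side, `(eᵗ - ∑_{j≤n} tʲ/j!)/t^(n+1) = ∑ₖ tᵏ/(n+1+k)!` is an entire
power series, whose `n`-th derivative is computed termwise.
-/

-- Closed before the main theorem: under `open Nat`, its binder `φ` would parse as `Nat.totient`.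
section

open Finset Nat

lemma cast_descFactorial_eq_div {K : Type*} [Field K] [CharZero K] {n k : ℕ} (h : k ≤ n) :
    (n.descFactorial k : K) = n ! / (n - k)! := by
  rw [eq_div_iff (Nat.cast_ne_zero.2 (factorial_ne_zero _)), mul_comm, ← Nat.cast_mul,
    factorial_mul_descFactorial h]

section EntireSeries

variable {a : ℕ → ℝ} {C : ℝ}

lemma summable_abs_mul_pow_of_abs_le_div_factorial (ha : ∀ k, |a k| ≤ C / k !) (r : ℝ) :
    Summable fun k => |a k| * |r| ^ k := by
  refine .of_nonneg_of_le (fun k => by positivity) (fun k => ?_)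
    ((Real.summable_pow_div_factorial |r|).mul_left C)
  calc |a k| * |r| ^ k ≤ C / k ! * |r| ^ k := by gcongr; exact ha k
    _ = C * (|r| ^ k / k !) := by ring

lemma summable_mul_pow_of_abs_le_div_factorial (ha : ∀ k, |a k| ≤ C / k !) (r : ℝ) :
    Summable fun k => a k * r ^ k :=
  .of_norm <| (summable_abs_mul_pow_of_abs_le_div_factorial ha r).congr fun k => by
    rw [Real.norm_eq_abs, abs_mul, abs_pow]

lemma abs_succ_mul_le_div_factorial (ha : ∀ k, |a k| ≤ C / k !) (k : ℕ) :
    |(k + 1) * a (k + 1)| ≤ C / k ! := by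
  have hk : (0 : ℝ) < k + 1 := by positivity
  calc |(k + 1) * a (k + 1)| = (k + 1) * |a (k + 1)| := by rw [abs_mul, abs_of_pos hk]
    _ ≤ (k + 1) * (C / (k + 1)!) := by gcongr; exact ha (k + 1)
    _ = C / k ! := by
      rw [Nat.factorial_succ]; push_cast; field_simp

theorem hasDerivAt_tsum_mul_pow (ha : ∀ k, |a k| ≤ C / k !) (x : ℝ) :
    HasDerivAt (fun t => ∑' k, a k * t ^ k) (∑' k, (k + 1) * a (k + 1) * x ^ k) x := by
  set R := |x| + 1
  have hR : 0 < R := by positivity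
  have hsucc := abs_succ_mul_le_div_factorial ha
  have hu : Summable fun k => |k * a k| * R ^ (k - 1) := by
    rw [← summable_nat_add_iff 1]
    refine (summable_abs_mul_pow_of_abs_le_div_factorial hsucc R).congr fun k => ?_
    rw [abs_of_pos hR]
    push_cast
    simp
  have hbound : ∀ k, ∀ y ∈ Metric.ball (0 : ℝ) R,
      ‖a k * (k * y ^ (k - 1))‖ ≤ |k * a k| * R ^ (k - 1) := by
    intro k y hy
    rw [mem_ball_zero_iff, Real.norm_eq_abs] at hy
    rw [Real.norm_eq_abs, mul_left_comm, ← mul_assoc, abs_mul, abs_pow]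
    gcongr
  have hx : x ∈ Metric.ball (0 : ℝ) R := by simp [R]
  have key := hasDerivAt_tsum_of_isPreconnected hu Metric.isOpen_ball
    (convex_ball (0 : ℝ) R).isPreconnected
    (fun k y _ => (hasDerivAt_pow k y).const_mul (a k)) hbound
    hx (summable_mul_pow_of_abs_le_div_factorial ha x) hx
  rw [tsum_eq_zero_add' ?_] at key
  · refine key.congr_deriv ?_
    rw [Nat.cast_zero, zero_mul, mul_zero, zero_add]
    exact tsum_congr fun k => by push_cast; ring
  · refine (summable_mul_pow_of_abs_le_div_factorial hsucc x).congr fun k => ?_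
    push_cast; ring

theorem iteratedDeriv_tsum_mul_pow (ha : ∀ k, |a k| ≤ C / k !) (m : ℕ) :
    iteratedDeriv m (fun t => ∑' k, a k * t ^ k) =
      fun x => ∑' k, (k + m).descFactorial m * a (k + m) * x ^ k := by
  induction m generalizing a with
  | zero => simp
  | succ m ih =>
    have hderiv : deriv (fun t => ∑' k, a k * t ^ k) =
        fun x => ∑' k, (k + 1) * a (k + 1) * x ^ k :=
      funext fun x => (hasDerivAt_tsum_mul_pow ha x).deriv
    rw [iteratedDeriv_succ', hderiv, ih (abs_succ_mul_le_div_factorial ha)]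
    funext x
    refine tsum_congr fun k => ?_
    rw [← add_assoc, Nat.succ_descFactorial_succ]
    push_cast
    ring

end EntireSeries

lemma hasSum_pow_div_factorial_exp (x : ℝ) : HasSum (fun j => x ^ j / (j ! : ℝ)) (Real.exp x) := by
  rw [Real.exp_eq_exp_ℝ]
  exact NormedSpace.expSeries_div_hasSum_exp x

lemma exp_sub_sum_range_eq_pow_mul_tsum (N : ℕ) (t : ℝ) :
    Real.exp t - ∑ j ∈ range N, t ^ j / (j ! : ℝ) = t ^ N * ∑' k, ((N + k)! : ℝ)⁻¹ * t ^ k := by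
  rw [← ((hasSum_nat_add_iff' N).2 (hasSum_pow_div_factorial_exp t)).tsum_eq, ← tsum_mul_left]
  refine tsum_congr fun k => ?_
  rw [pow_add, add_comm k N]
  ring

theorem iteratedDeriv_exp_sub_sum_range_div_pow (N m : ℕ) {x : ℝ} (hx : x ≠ 0) :
    iteratedDeriv m (fun t => (Real.exp t - ∑ j ∈ range N, t ^ j / (j ! : ℝ)) / t ^ N) x =
      ∑' k, (k + m).descFactorial m * ((N + (k + m))! : ℝ)⁻¹ * x ^ k := by
  have hcoeff : ∀ k, |((N + k)! : ℝ)⁻¹| ≤ 1 / k ! := fun k => by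
    rw [abs_inv, Nat.abs_cast, one_div]
    exact inv_anti₀ (by positivity) (Nat.cast_le.2 (factorial_le (Nat.le_add_left k N)))
  have heq : (fun t => (Real.exp t - ∑ j ∈ range N, t ^ j / (j ! : ℝ)) / t ^ N) =ᶠ[nhds x]
      fun t => ∑' k, ((N + k)! : ℝ)⁻¹ * t ^ k := by
    filter_upwards [isOpen_ne.mem_nhds hx] with t ht
    rw [exp_sub_sum_range_eq_pow_mul_tsum, mul_div_cancel_left₀ _ (pow_ne_zero _ ht)]
  rw [heq.iteratedDeriv_eq, iteratedDeriv_tsum_mul_pow hcoeff]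

section Pade

open Polynomial

section SumRange

variable {R : Type*} [Semiring R] (c : ℕ → R) (n : ℕ)

lemma coeff_sum_range_C_mul_X_pow (j : ℕ) :
    (∑ i ∈ range (n + 1), C (c i) * X ^ i).coeff j = if j ≤ n then c j else 0 := by
  simp

lemma degree_sum_range_C_mul_X_pow (hc : c n ≠ 0) :
    (∑ i ∈ range (n + 1), C (c i) * X ^ i).degree = (n : WithBot ℕ) := by
  refine degree_eq_of_le_of_coeff_ne_zero ?_ (by rwa [coeff_sum_range_C_mul_X_pow, if_pos le_rfl])
  refine degree_le_iff_coeff_zero _ _ |>.2 fun j hj => ?_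
  rw [coeff_sum_range_C_mul_X_pow, if_neg (by exact_mod_cast hj.not_ge)]

end SumRange

theorem hasSum_exp_mul_eval (p : ℝ[X]) {N : ℕ} (hN : p.natDegree ≤ N) (x : ℝ) :
    HasSum (fun m => (∑ i ∈ range (N + 1), m.descFactorial i * p.coeff i) * x ^ m / m !)
      (Real.exp x * p.eval x) := by
  have hp : HasSum (fun i => p.coeff i * x ^ i) (p.eval x) := by
    rw [eval_eq_sum_range' (Nat.lt_succ_of_le hN)]
    exact hasSum_sum_of_ne_finset_zero fun i hi => by
      rw [coeff_eq_zero_of_natDegree_lt (by simp at hi; omega), zero_mul]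
  have hpn : Summable fun i => ‖p.coeff i * x ^ i‖ :=
    summable_of_ne_finset_zero (s := range (N + 1)) fun i hi => by
      rw [coeff_eq_zero_of_natDegree_lt (by simp at hi; omega), zero_mul, norm_zero]
  have hen : Summable fun j => ‖x ^ j / (j ! : ℝ)‖ :=
    (Real.summable_pow_div_factorial |x|).congr fun j => by
      rw [Real.norm_eq_abs, abs_div, abs_pow, Nat.abs_cast]
  have := hasSum_sum_range_mul_of_summable_norm hpn hen
  rw [hp.tsum_eq, (hasSum_pow_div_factorial_exp x).tsum_eq, mul_comm] at this
  refine this.congr_fun fun m => ?_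
  have hvanish : ∀ i ≥ min m N + 1, (m.descFactorial i : ℝ) * p.coeff i * x ^ m / m ! = 0 :=
    fun i hi => by
      rcases Nat.lt_or_ge m i with h | h
      · rw [Nat.descFactorial_eq_zero_iff_lt.2 h, Nat.cast_zero, zero_mul, zero_mul, zero_div]
      · rw [coeff_eq_zero_of_natDegree_lt (by omega), mul_zero, zero_mul, zero_div]
  rw [sum_mul, sum_div, eventually_constant_sum hvanish (by omega),
    ← eventually_constant_sum hvanish (Nat.succ_le_succ (min_le_left m N))]
  refine sum_congr rfl fun k hk => ?_
  have hk : k ≤ m := Nat.lt_succ_iff.1 (mem_range.1 hk)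
  rw [cast_descFactorial_eq_div hk, ← pow_mul_pow_sub x hk]
  field_simp

/- The coefficients are `(-1)ⁿ⁻ⁱ (2n-i)!/(i!(n-i)!)` and `(-1)ⁿ (2n-i)!/(i!(n-i)!)`, so that
`padeNum n` is `padeDen n` evaluated at `-X`. -/
noncomputable def padeDen (n : ℕ) : ℤ[X] :=
  ∑ i ∈ range (n + 1), C (n.descFactorial (n - i) * Ring.choose (-(n + 1 : ℤ)) (n - i)) * X ^ i

noncomputable def padeNum (n : ℕ) : ℤ[X] :=
  ∑ i ∈ range (n + 1), C (n.descFactorial (n - i) * Ring.choose ((i : ℤ) - n - 1) n) * X ^ i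

lemma degree_padeDen (n : ℕ) : (padeDen n).degree = n :=
  degree_sum_range_C_mul_X_pow _ n (by simp)

lemma degree_padeNum (n : ℕ) : (padeNum n).degree = n := by
  refine degree_sum_range_C_mul_X_pow _ n ?_
  rw [sub_sub, sub_add_cancel_left, Ring.choose_neg, add_sub_cancel_left, Ring.choose_natCast,
    Nat.choose_self, Nat.cast_one, Units.smul_def, smul_eq_mul, mul_one, Nat.sub_self,
    Nat.descFactorial_zero, Nat.cast_one, one_mul]
  exact Units.ne_zero _

lemma sum_descFactorial_mul_coeff_padeDen (n m : ℕ) :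
    ∑ i ∈ range (n + 1), (m.descFactorial i : ℤ) * (padeDen n).coeff i =
      n ! * Ring.choose ((m : ℤ) - n - 1) n := by
  have hterm : ∀ i ∈ range (n + 1), (m.descFactorial i : ℤ) * (padeDen n).coeff i =
      n ! * (Ring.choose (m : ℤ) i * Ring.choose (-(n + 1 : ℤ)) (n - i)) := fun i hi => by
    have hi : i ≤ n := Nat.lt_succ_iff.1 (mem_range.1 hi)
    have hfac : i ! * n.descFactorial (n - i) = n ! := by
      simpa [Nat.sub_sub_self hi] using factorial_mul_descFactorial (Nat.sub_le n i)
    rw [padeDen, coeff_sum_range_C_mul_X_pow, if_pos hi, Ring.choose_natCast,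
      descFactorial_eq_factorial_mul_choose, ← hfac]
    push_cast
    ring
  rw [sum_congr rfl hterm, ← mul_sum, ← Nat.sum_antidiagonal_eq_sum_range_succ
    (fun i j => Ring.choose (m : ℤ) i * Ring.choose (-(n + 1 : ℤ)) j),
    ← Ring.add_choose_eq _ (Commute.all _ _)]
  ring_nf

noncomputable def expPadeCoeff (n m : ℕ) : ℝ := (n ! * Ring.choose ((m : ℤ) - n - 1) n : ℤ) / m !

theorem hasSum_exp_mul_aeval_padeDen (n : ℕ) (x : ℝ) :
    HasSum (fun m => expPadeCoeff n m * x ^ m) (Real.exp x * aeval x (padeDen n)) := by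
  have hdeg : ((padeDen n).map (algebraMap ℤ ℝ)).natDegree ≤ n :=
    natDegree_map_le.trans (natDegree_le_of_degree_le (degree_padeDen n).le)
  have := hasSum_exp_mul_eval _ hdeg x
  rw [eval_map_algebraMap] at this
  refine this.congr_fun fun m => ?_
  simp only [expPadeCoeff, coeff_map, algebraMap_int_eq, Int.coe_castRingHom,
    ← sum_descFactorial_mul_coeff_padeDen]
  push_cast
  ring

lemma aeval_padeNum (n : ℕ) (x : ℝ) :
    aeval x (padeNum n) = ∑ m ∈ range (n + 1), expPadeCoeff n m * x ^ m := by
  simp only [padeNum, map_sum]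
  refine sum_congr rfl fun m hm => ?_
  have hm : m ≤ n := Nat.lt_succ_iff.1 (mem_range.1 hm)
  simp only [expPadeCoeff, aeval_C, aeval_X_pow, map_mul, algebraMap_int_eq, Int.coe_castRingHom]
  push_cast
  rw [cast_descFactorial_eq_div (Nat.sub_le n m), Nat.sub_sub_self hm]
  ring

lemma expPadeCoeff_eq_zero {n m : ℕ} (h₁ : n < m) (h₂ : m ≤ 2 * n) : expPadeCoeff n m = 0 := by
  have : (m : ℤ) - n - 1 = (m - n - 1 : ℕ) := by push_cast [Nat.sub_sub, Nat.cast_sub h₁]; ring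
  rw [expPadeCoeff, this, Ring.choose_natCast, Nat.choose_eq_zero_of_lt (by omega)]
  simp

lemma expPadeCoeff_add (n k : ℕ) :
    expPadeCoeff n (2 * n + 1 + k) = (n + k)! / (k ! * (2 * n + 1 + k)!) := by
  have : ((2 * n + 1 + k : ℕ) : ℤ) - n - 1 = (n + k : ℕ) := by push_cast; ring
  rw [expPadeCoeff, this, Ring.choose_natCast]
  push_cast
  rw [← Nat.cast_mul, ← descFactorial_eq_factorial_mul_choose,
    cast_descFactorial_eq_div (Nat.le_add_right n k), Nat.add_sub_cancel_left]
  field_simp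

theorem exp_mul_aeval_padeDen_sub_aeval_padeNum (n : ℕ) (x : ℝ) :
    Real.exp x * aeval x (padeDen n) - aeval x (padeNum n) =
      ∑' k, ((n + k)! : ℝ) / (k ! * (2 * n + 1 + k)!) * x ^ (2 * n + 1 + k) := by
  have hsum := hasSum_exp_mul_aeval_padeDen n x
  have hhead : ∑ m ∈ range (2 * n + 1), expPadeCoeff n m * x ^ m = aeval x (padeNum n) := by
    rw [aeval_padeNum, show 2 * n + 1 = (n + 1) + n by ring, sum_range_add, add_eq_left]
    exact sum_eq_zero fun j hj => by
      rw [expPadeCoeff_eq_zero (by omega) (by simp at hj; omega), zero_mul]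
  rw [← hsum.tsum_eq, ← hsum.summable.sum_add_tsum_nat_add (2 * n + 1), hhead,
    add_sub_cancel_left]
  exact tsum_congr fun k => by rw [add_comm k, expPadeCoeff_add]

end Pade

end

/-- Hermite's Padé approximants of the exponential (letter of December 3, 1875):
for every `n` there are integer polynomials `φ`, `ψ` of degree `n` with
`exp x * φ x - ψ x = ∑_{k} ((n+k)!/(k!(2n+1+k)!)) x^(2n+1+k)` and, for `x ≠ 0`,
the `n`-th derivative of `(exp t - ∑_{j≤n} t^j/j!)/t^(n+1)` equals
`(exp x * φ x - ψ x)/x^(2n+1)`. -/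
theorem hermite_pade_exp (n : ℕ) :
    ∃ φ ψ : Polynomial ℤ, φ.degree = n ∧ ψ.degree = n ∧
      (∀ x : ℝ,
        Real.exp x * Polynomial.aeval x φ - Polynomial.aeval x ψ =
          ∑' k : ℕ, ((Nat.factorial (n + k) : ℝ) /
            (Nat.factorial k * Nat.factorial (2 * n + 1 + k))) * x ^ (2 * n + 1 + k)) ∧
      (∀ x : ℝ, x ≠ 0 →
        iteratedDeriv n
          (fun t : ℝ =>
            (Real.exp t - ∑ j ∈ Finset.range (n + 1), t ^ j / (Nat.factorial j : ℝ)) /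
              t ^ (n + 1)) x =
          (Real.exp x * Polynomial.aeval x φ - Polynomial.aeval x ψ) / x ^ (2 * n + 1)) := by
  refine ⟨padeDen n, padeNum n, degree_padeDen n, degree_padeNum n,
    exp_mul_aeval_padeDen_sub_aeval_padeNum n, fun x hx => ?_⟩
  rw [iteratedDeriv_exp_sub_sum_range_div_pow _ _ hx, exp_mul_aeval_padeDen_sub_aeval_padeNum,
    eq_div_iff (pow_ne_zero _ hx), ← tsum_mul_right]
  refine tsum_congr fun k => ?_
  rw [show n + 1 + (k + n) = 2 * n + 1 + k by ring, add_comm k n,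
    cast_descFactorial_eq_div (Nat.le_add_right n k), Nat.add_sub_cancel_left, pow_add]
  field_simp
  ring
end

section
/- For every positive integer m, the real number e^m = exp(m) is irrational. -/
/-!
Hermite's argument, through the approximations built for Lindemann–Weierstrass
(`LindemannWeierstrass.exp_polynomial_approx`, from the integral of
`x ^ (p - 1) * (x - k) ^ p * exp (-x)`): for every large prime `p` there are integers `n`, `g`
with `p ∤ n` and `|n * exp k - p * g| ≤ c ^ p / (p - 1)!`. If `exp k = a / b`, then
`b * (n * exp k - p * g)` is an integer congruent to `n * a` modulo `p`, hence nonzero once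
`p > |a|`; so it has absolute value at least `1`, which the factorial decay forbids.
-/

open Filter Polynomial
open scoped Nat

theorem irrational_of_frequently_prime_approx {x : ℝ} (hx : x ≠ 0)
    (h : ∀ ε > 0, ∃ᶠ p : ℕ in atTop,
      p.Prime ∧ ∃ n g : ℤ, ¬ (p : ℤ) ∣ n ∧ |n * x - p * g| < ε) :
    Irrational x := by
  rintro ⟨q, rfl⟩
  have hb : (0 : ℝ) < q.den := by exact_mod_cast q.pos
  obtain ⟨p, ⟨hp, n, g, hpn, hlt⟩, hpa⟩ :=
    ((h (1 / q.den) (by positivity)).and_eventually (eventually_gt_atTop q.num.natAbs)).exists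
  have hscale : (q.den : ℝ) * (n * q - p * g) = ((n * q.num - p * (q.den * g) : ℤ) : ℝ) := by
    rw [Rat.cast_def]
    push_cast
    field_simp
  have hne : n * q.num - p * (q.den * g) ≠ 0 := by
    intro h0
    have hdvd : (p : ℤ) ∣ n * q.num := by
      rw [sub_eq_zero] at h0
      exact h0 ▸ dvd_mul_right _ _
    rcases (Nat.prime_iff_prime_int.mp hp).dvd_or_dvd hdvd with hn | ha
    · exact hpn hn
    · have hq : q.num ≠ 0 := by simpa using hx
      exact absurd (Nat.le_of_dvd (Int.natAbs_pos.mpr hq) (Int.natCast_dvd.mp ha)) hpa.not_ge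
  refine lt_irrefl (1 : ℝ) ?_
  calc (1 : ℝ) ≤ |((n * q.num - p * (q.den * g) : ℤ) : ℝ)| := by
        exact_mod_cast Int.one_le_abs hne
    _ = q.den * |(n : ℝ) * q - p * g| := by rw [← hscale, abs_mul, abs_of_pos hb]
    _ < q.den * (1 / q.den) := mul_lt_mul_of_pos_left hlt hb
    _ = 1 := mul_one_div_cancel hb.ne'

theorem frequently_prime_approx_exp_intCast {k : ℤ} (hk : k ≠ 0) :
    ∀ ε > 0, ∃ᶠ p : ℕ in atTop,
      p.Prime ∧ ∃ n g : ℤ, ¬ (p : ℤ) ∣ n ∧ |n * Real.exp k - p * g| < ε := by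
  obtain ⟨c, hc⟩ := LindemannWeierstrass.exp_polynomial_approx (X - C k) (by simpa using hk)
  intro ε hε
  have hdecay : ∀ᶠ p : ℕ in atTop, c ^ p / (p - 1)! < ε := by
    simpa using (FloorSemiring.tendsto_mul_pow_div_factorial_sub_atTop 1 c 1).eventually
      (gt_mem_nhds hε)
  refine ((Nat.frequently_atTop_iff_infinite.mpr Nat.infinite_setOfPred_prime).and_eventually
    (hdecay.and (eventually_gt_atTop k.natAbs))).mono ?_
  rintro p ⟨hp, hdecay, hpk⟩
  obtain ⟨n, hpn, gp, -, happrox⟩ := hc p (by simpa using hpk) hp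
  refine ⟨hp, n, gp.eval k, hpn, lt_of_le_of_lt ?_ hdecay⟩
  have hroot : (k : ℂ) ∈ (X - C k).aroots ℂ := by rw [aroots_X_sub_C]; simp
  have hreal : n • Complex.exp k - p • aeval (k : ℂ) gp
      = ((n * Real.exp k - p * gp.eval k : ℝ) : ℂ) := by
    have hint := aeval_algebraMap_apply_eq_algebraMap_eval (A := ℂ) k gp
    simp only [algebraMap_int_eq, eq_intCast] at hint
    rw [hint]
    push_cast
    simp
  simpa only [hreal, Complex.norm_real, Real.norm_eq_abs] using happrox hroot

theorem irrational_exp_intCast {k : ℤ} (hk : k ≠ 0) : Irrational (Real.exp k) :=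
  irrational_of_frequently_prime_approx (Real.exp_pos _).ne' (frequently_prime_approx_exp_intCast hk)

/-- Lambert's theorem: every positive integer power of `e` is irrational. -/
theorem irrational_exp_nat_pos (m : ℕ) (hm : 0 < m) : Irrational (Real.exp m) := by
  simpa using irrational_exp_intCast (k := m) (by positivity)
end

section
/- For every real x > 0 and every natural number n, the quantity R_n(x) = Σ_{k=0}^{∞} ((n+k)!/(k!·(2n+1+k)!))·x^{2n+1+k} satisfies 0 < R_n(x) ≤ (n!/(2n+1)!)·x^{2n+1}·exp(x); consequently, for every fixed x > 0 the sequence n ↦ R_n(x) tends to 0 as n → ∞. -/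
/-!
Since `(n + k)! / (2n + 1 + k)!` decreases in `k`, the `k`-th term of `R_n(x)` is at most
`n! / (2n + 1)! · x^(2n+1) · x^k / k!`, and summing the exponential series gives the bound.
As `n! · n! ≤ (2n + 1)!`, that bound is at most `x e^x (x²)^n / n!`, which tends to `0`.
-/

open Nat Filter Topology

theorem Nat.factorial_add_mul_factorial_le_of_le {n m : ℕ} (h : n ≤ m) (k : ℕ) :
    (n + k)! * m ! ≤ n ! * (m + k)! := by
  rw [← factorial_mul_ascFactorial n k, ← factorial_mul_ascFactorial m k]
  calc n ! * (n + 1).ascFactorial k * m ! = n ! * m ! * (n + 1).ascFactorial k := by ring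
    _ ≤ n ! * m ! * (m + 1).ascFactorial k := by gcongr
    _ = n ! * (m ! * (m + 1).ascFactorial k) := by ring

theorem Nat.factorial_mul_factorial_le_factorial_two_mul_add_one (n : ℕ) :
    n ! * n ! ≤ (2 * n + 1)! :=
  calc n ! * n ! ≤ n ! * (n + 1)! := by gcongr; omega
    _ ≤ (n + (n + 1))! :=
      Nat.le_of_dvd (factorial_pos _) (factorial_mul_factorial_dvd_factorial_add _ _)
    _ = (2 * n + 1)! := by ring_nf

/-- Hermite's remainder `R_n(x)`. -/
noncomputable def hermiteRemainder (n : ℕ) (x : ℝ) : ℝ :=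
  ∑' k : ℕ, ((n + k)! : ℝ) / (k ! * (2 * n + 1 + k)!) * x ^ (2 * n + 1 + k)

section hermiteRemainder

variable (n : ℕ) {x : ℝ}

theorem hermiteRemainder_term_le (hx : 0 ≤ x) (k : ℕ) :
    ((n + k)! : ℝ) / (k ! * (2 * n + 1 + k)!) * x ^ (2 * n + 1 + k) ≤
      (n ! : ℝ) / (2 * n + 1)! * x ^ (2 * n + 1) * (x ^ k / k !) := by
  have hfac : ((n + k)! : ℝ) / (2 * n + 1 + k)! ≤ (n ! : ℝ) / (2 * n + 1)! := by
    rw [div_le_div_iff₀ (by positivity) (by positivity)]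
    exact_mod_cast factorial_add_mul_factorial_le_of_le (by omega) k
  calc ((n + k)! : ℝ) / (k ! * (2 * n + 1 + k)!) * x ^ (2 * n + 1 + k)
      = ((n + k)! : ℝ) / (2 * n + 1 + k)! * (x ^ (2 * n + 1) * (x ^ k / k !)) := by
        rw [pow_add]; field_simp
    _ ≤ (n ! : ℝ) / (2 * n + 1)! * (x ^ (2 * n + 1) * (x ^ k / k !)) := by gcongr
    _ = (n ! : ℝ) / (2 * n + 1)! * x ^ (2 * n + 1) * (x ^ k / k !) := by ring

theorem summable_hermiteRemainder_term (hx : 0 ≤ x) :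
    Summable fun k : ℕ => ((n + k)! : ℝ) / (k ! * (2 * n + 1 + k)!) * x ^ (2 * n + 1 + k) :=
  .of_nonneg_of_le (fun _ => by positivity) (hermiteRemainder_term_le n hx)
    ((Real.summable_pow_div_factorial x).mul_left _)

theorem hermiteRemainder_pos (hx : 0 < x) : 0 < hermiteRemainder n x :=
  (summable_hermiteRemainder_term n hx.le).tsum_pos (fun _ => by positivity) 0 (by positivity)

theorem hermiteRemainder_le (hx : 0 ≤ x) :
    hermiteRemainder n x ≤ (n ! : ℝ) / (2 * n + 1)! * x ^ (2 * n + 1) * Real.exp x := by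
  refine ((summable_hermiteRemainder_term n hx).tsum_le_tsum (hermiteRemainder_term_le n hx)
    ((Real.summable_pow_div_factorial x).mul_left _)).trans_eq ?_
  rw [tsum_mul_left, Real.exp_eq_exp_ℝ, (NormedSpace.expSeries_div_hasSum_exp x).tsum_eq]

end hermiteRemainder

theorem tendsto_factorial_div_factorial_two_mul_add_one_mul_pow {x : ℝ} (hx : 0 ≤ x) :
    Tendsto (fun n : ℕ => (n ! : ℝ) / (2 * n + 1)! * x ^ (2 * n + 1)) atTop (𝓝 0) := by
  have hlim := (FloorSemiring.tendsto_pow_div_factorial_atTop (x ^ 2)).const_mul x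
  rw [mul_zero] at hlim
  refine squeeze_zero (fun _ => by positivity) (fun n => ?_) hlim
  have hfac : (n ! : ℝ) / (2 * n + 1)! ≤ 1 / n ! := by
    rw [div_le_div_iff₀ (by positivity) (by positivity), one_mul]
    exact_mod_cast factorial_mul_factorial_le_factorial_two_mul_add_one n
  calc (n ! : ℝ) / (2 * n + 1)! * x ^ (2 * n + 1) ≤ 1 / n ! * x ^ (2 * n + 1) := by gcongr
    _ = x * ((x ^ 2) ^ n / n !) := by rw [← pow_mul, pow_succ]; ring

/-- Hermite's key estimate (letter of December 3, 1875): for `x > 0`,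
`0 < R_n(x) ≤ (n!/(2n+1)!) x^(2n+1) exp x`, hence `R_n(x) → 0` as `n → ∞`. -/
theorem hermite_remainder_estimate (x : ℝ) (hx : 0 < x) :
    (∀ n : ℕ,
      0 < ∑' k : ℕ, ((Nat.factorial (n + k) : ℝ) /
          (Nat.factorial k * Nat.factorial (2 * n + 1 + k))) * x ^ (2 * n + 1 + k) ∧
      ∑' k : ℕ, ((Nat.factorial (n + k) : ℝ) /
          (Nat.factorial k * Nat.factorial (2 * n + 1 + k))) * x ^ (2 * n + 1 + k) ≤
        ((Nat.factorial n : ℝ) / Nat.factorial (2 * n + 1)) * x ^ (2 * n + 1) * Real.exp x) ∧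
    Filter.Tendsto
      (fun n : ℕ => ∑' k : ℕ, ((Nat.factorial (n + k) : ℝ) /
        (Nat.factorial k * Nat.factorial (2 * n + 1 + k))) * x ^ (2 * n + 1 + k))
      Filter.atTop (nhds 0) := by
  have hbounds (n : ℕ) : 0 < hermiteRemainder n x ∧
      hermiteRemainder n x ≤ (n ! : ℝ) / (2 * n + 1)! * x ^ (2 * n + 1) * Real.exp x :=
    ⟨hermiteRemainder_pos n hx, hermiteRemainder_le n hx.le⟩
  have hlim := (tendsto_factorial_div_factorial_two_mul_add_one_mul_pow hx.le).mul_const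
    (Real.exp x)
  rw [zero_mul] at hlim
  exact ⟨hbounds, squeeze_zero (fun n => (hbounds n).1.le) (fun n => (hbounds n).2) hlim⟩
end

section
/- For every natural number n, let P ∈ ℝ[X] be the n-th Legendre polynomial defined by the Rodrigues formula P = (1/(2^n·n!))·D^n((X²−1)^n), where D^n denotes the n-fold formal derivative of polynomials. Then there exist a polynomial Q ∈ ℝ[X] with degree of Q strictly less than n and a constant C ≥ 0 such that for all real x ≥ 2, |P(x)·(1/2)·log((x+1)/(x−1)) − Q(x)| ≤ C/x^{n+1}. -/
/-!
Since `log ((x + 1) / (x - 1)) = ∫_{-1}^{1} dt / (x - t)`, splitting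
`P(x) = (P(x) - P(t)) + P(t)` gives
`P(x) · ½ log ((x + 1) / (x - 1)) = Q(x) + ½ ∫_{-1}^{1} P(t) / (x - t) dt`, where
`Q(x) = ½ ∫_{-1}^{1} (P(x) - P(t)) / (x - t) dt` is a polynomial of degree `< n`.
By Rodrigues' formula and repeated integration by parts, `P` is orthogonal on `[-1, 1]` to every
`t^i` with `i < n`, so expanding `1 / (x - t) = ∑_{i<n} t^i / x^(i+1) + (t / x)^n / (x - t)` leaves
only `x^(-n) · ½ ∫_{-1}^{1} t^n P(t) / (x - t) dt = O(x^(-n-1))`.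
-/

open Polynomial Finset

namespace Polynomial

theorem integral_eval_derivative (q : ℝ[X]) (a b : ℝ) :
    ∫ t in a..b, (derivative q).eval t = q.eval b - q.eval a :=
  intervalIntegral.integral_eq_sub_of_hasDerivAt (fun t _ ↦ q.hasDerivAt t)
    ((derivative q).continuous.intervalIntegrable a b)

theorem integral_pow_mul_iterate_derivative_eq_zero {g : ℝ[X]} {a b : ℝ} {n : ℕ}
    (hg : ∀ j < n, (derivative^[j] g).IsRoot a ∧ (derivative^[j] g).IsRoot b) :
    ∀ j ≤ n, ∀ k < j, ∫ t in a..b, t ^ k * (derivative^[j] g).eval t = 0 := by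
  intro j
  induction j with
  | zero => intro _ k hk; omega
  | succ j ih =>
    intro hj k hk
    obtain ⟨ha, hb⟩ := hg j (by omega)
    cases k with
    | zero =>
      simpa [Function.iterate_succ_apply', ha.eq_zero, hb.eq_zero] using
        integral_eval_derivative (derivative^[j] g) a b
    | succ k =>
      have hparts := intervalIntegral.integral_mul_deriv_eq_deriv_mul
        (u := fun t ↦ t ^ (k + 1)) (u' := fun t ↦ (k + 1 : ℕ) * t ^ k)
        (v := fun t ↦ (derivative^[j] g).eval t)
        (v' := fun t ↦ (derivative^[j + 1] g).eval t)
        (fun t _ ↦ by simpa using hasDerivAt_pow (k + 1) t)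
        (fun t _ ↦ by simpa [Function.iterate_succ_apply'] using (derivative^[j] g).hasDerivAt t)
        ((by fun_prop : Continuous _).intervalIntegrable a b)
        ((derivative^[j + 1] g).continuous.intervalIntegrable a b)
      simp_rw [mul_assoc, intervalIntegral.integral_const_mul] at hparts
      simpa [ha.eq_zero, hb.eq_zero, ih (by omega) k (by omega)] using hparts

theorem isRoot_iterate_derivative_X_sq_sub_one_pow {j n : ℕ} (hj : j < n) {y : ℝ}
    (hy : y ^ 2 = 1) : (derivative^[j] ((X ^ 2 - 1 : ℝ[X]) ^ n)).IsRoot y :=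
  IsRoot.dvd (by simp [hy]) <|
    (dvd_pow_self _ (by omega)).trans (pow_sub_dvd_iterate_derivative_pow _ n j)

theorem natDegree_iterate_derivative_X_sq_sub_one_pow_le (n : ℕ) :
    (derivative^[n] ((X ^ 2 - 1 : ℝ[X]) ^ n)).natDegree ≤ n := by
  have : ((X ^ 2 - 1 : ℝ[X]) ^ n).natDegree ≤ 2 * n := by
    compute_degree
    omega
  exact (natDegree_iterate_derivative _ n).trans (by omega)

theorem integral_pow_mul_iterate_derivative_X_sq_sub_one_pow_eq_zero {k n : ℕ} (hk : k < n) :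
    ∫ t in (-1 : ℝ)..1, t ^ k * (derivative^[n] ((X ^ 2 - 1 : ℝ[X]) ^ n)).eval t = 0 :=
  integral_pow_mul_iterate_derivative_eq_zero
    (fun _ hj ↦ ⟨isRoot_iterate_derivative_X_sq_sub_one_pow hj (by norm_num),
      isRoot_iterate_derivative_X_sq_sub_one_pow hj (by norm_num)⟩) n le_rfl k hk

variable {R : Type*} [CommRing R]

theorem natDegree_iterate_divX (p : R[X]) (N : ℕ) :
    (divX^[N] p).natDegree = p.natDegree - N := by
  induction N with
  | zero => simp
  | succ N ih => rw [Function.iterate_succ_apply', natDegree_divX_eq_natDegree_tsub_one, ih]; omega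

theorem sub_mul_sum_eval_iterate_divX (p : R[X]) (N : ℕ) (x t : R) :
    (x - t) * ∑ i ∈ range N, x ^ i * (divX^[i + 1] p).eval t =
      p.eval x - p.eval t - x ^ N * ((divX^[N] p).eval x - (divX^[N] p).eval t) := by
  induction N generalizing p with
  | zero => simp
  | succ N ih =>
    have hp (y : R) : p.eval y = y * (divX p).eval y + p.coeff 0 := by
      conv_lhs => rw [← divX_mul_X_add p]
      rw [eval_add, eval_mul, eval_X, eval_C, mul_comm]
    have hshift (i : ℕ) : divX^[i + 1 + 1] p = divX^[i + 1] (divX p) :=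
      Function.iterate_succ_apply _ _ _
    rw [sum_range_succ', Function.iterate_succ_apply divX N p, zero_add, Function.iterate_one,
      pow_zero, one_mul]
    simp only [hshift, pow_succ', mul_assoc, ← mul_sum]
    linear_combination x * ih (divX p) - hp x + hp t

theorem eval_sub_eval_eq_mul_sum_divX {p : R[X]} {N : ℕ} (hN : p.natDegree ≤ N) (x t : R) :
    p.eval x - p.eval t = (x - t) * ∑ i ∈ range N, x ^ i * (divX^[i + 1] p).eval t := by
  obtain ⟨c, hc⟩ : ∃ c, divX^[N] p = C c :=
    ⟨_, eq_C_of_natDegree_eq_zero (by rw [natDegree_iterate_divX]; omega)⟩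
  rw [sub_mul_sum_eval_iterate_divX, hc, eval_C, eval_C, sub_self, mul_zero, sub_zero]

end Polynomial

theorem inv_sub_eq_sum_add {K : Type*} [Field K] {x t : K} (hx : x ≠ 0) (hxt : x - t ≠ 0)
    (n : ℕ) : (x - t)⁻¹ = ∑ i ∈ range n, t ^ i / x ^ (i + 1) + t ^ n / x ^ n * (x - t)⁻¹ := by
  induction n with
  | zero => simp
  | succ n ih =>
    have step : t ^ n / x ^ n * (x - t)⁻¹ =
        t ^ n / x ^ (n + 1) + t ^ (n + 1) / x ^ (n + 1) * (x - t)⁻¹ := by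
      field_simp
      ring
    rw [sum_range_succ, add_assoc, ← step, ← ih]

theorem Real.log_div_eq_integral_inv_sub {x : ℝ} (hx : 1 < x) :
    Real.log ((x + 1) / (x - 1)) = ∫ t in (-1 : ℝ)..1, (x - t)⁻¹ := by
  rw [intervalIntegral.integral_comp_sub_left (fun u ↦ u⁻¹) x, integral_inv]
  · ring_nf
  · rw [Set.uIcc_of_le (by linarith)]
    exact fun h ↦ by linarith [h.1]

theorem intervalIntegrable_mul_inv_sub {f : ℝ → ℝ} (hf : Continuous f) {x : ℝ} (hx : 1 < x) :
    IntervalIntegrable (fun t ↦ f t * (x - t)⁻¹) MeasureTheory.volume (-1) 1 := by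
  refine ContinuousOn.intervalIntegrable
    (hf.continuousOn.mul (ContinuousOn.inv₀ (by fun_prop) ?_))
  intro t ht
  rw [Set.uIcc_of_le (by norm_num)] at ht
  linarith [ht.2]

theorem abs_integral_mul_inv_sub_le {f : ℝ → ℝ} {M x : ℝ}
    (hf : ∀ t ∈ Set.Icc (-1 : ℝ) 1, |f t| ≤ M) (hx : 1 < x) :
    |∫ t in (-1 : ℝ)..1, f t * (x - t)⁻¹| ≤ 2 * M / (x - 1) := by
  have hbound : ∀ t ∈ Set.uIoc (-1 : ℝ) 1, ‖f t * (x - t)⁻¹‖ ≤ M * (x - 1)⁻¹ := by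
    intro t ht
    rw [Set.uIoc_of_le (by norm_num)] at ht
    have hft := hf t (Set.Ioc_subset_Icc_self ht)
    rw [Real.norm_eq_abs, abs_mul, abs_inv, abs_of_pos (show 0 < x - t by linarith [ht.2])]
    exact mul_le_mul hft (inv_anti₀ (by linarith) (by linarith [ht.2]))
      (inv_nonneg.2 (by linarith [ht.2]))
      ((abs_nonneg _).trans hft)
  have := intervalIntegral.norm_integral_le_of_norm_le_const hbound
  rw [Real.norm_eq_abs] at this
  convert this using 1
  norm_num
  ring

/-- `½ ∫_{-1}^{1} (p(x) - p(t)) / (x - t) dt`: the coefficient of `x^i` in the difference quotient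
is `(divX^[i + 1] p).eval t` (see `eval_sub_eval_eq_mul_sum_divX`). -/
noncomputable def logPadeNumerator (p : ℝ[X]) (n : ℕ) : ℝ[X] :=
  ∑ i : Fin n, C (2⁻¹ * ∫ t in (-1 : ℝ)..1, (divX^[i + 1] p).eval t) * X ^ (i : ℕ)

theorem degree_logPadeNumerator_lt (p : ℝ[X]) (n : ℕ) : (logPadeNumerator p n).degree < n :=
  degree_sum_fin_lt _

theorem eval_mul_integral_inv_sub {p : ℝ[X]} {n : ℕ} (hp : p.natDegree ≤ n) {x : ℝ}
    (hx : 1 < x) :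
    p.eval x * ∫ t in (-1 : ℝ)..1, (x - t)⁻¹ =
      2 * (logPadeNumerator p n).eval x + ∫ t in (-1 : ℝ)..1, p.eval t * (x - t)⁻¹ := by
  have hsplit : ∀ t ∈ Set.uIcc (-1 : ℝ) 1, p.eval x * (x - t)⁻¹ =
      ∑ i ∈ range n, x ^ i * (divX^[i + 1] p).eval t + p.eval t * (x - t)⁻¹ := by
    intro t ht
    rw [Set.uIcc_of_le (by norm_num)] at ht
    have hxt : x - t ≠ 0 := by linarith [ht.2]
    rw [← sub_eq_iff_eq_add, ← sub_mul, eval_sub_eval_eq_mul_sum_divX hp, mul_comm (x - t),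
      mul_assoc, mul_inv_cancel₀ hxt, mul_one]
  rw [← intervalIntegral.integral_const_mul, intervalIntegral.integral_congr hsplit,
    intervalIntegral.integral_add ((by fun_prop : Continuous _).intervalIntegrable _ _)
      (intervalIntegrable_mul_inv_sub p.continuous hx),
    intervalIntegral.integral_finsetSum
      fun i _ ↦ (by fun_prop : Continuous _).intervalIntegrable _ _]
  simp only [logPadeNumerator, eval_finsetSum, eval_mul, eval_C, eval_X_pow,
    intervalIntegral.integral_const_mul, mul_sum,
    Fin.sum_univ_eq_sum_range
      (fun i ↦ 2 * ((2⁻¹ * ∫ t in (-1 : ℝ)..1, (divX^[i + 1] p).eval t) * x ^ i))]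
  congr 1
  exact sum_congr rfl fun i _ ↦ by ring

theorem integral_eval_mul_inv_sub_of_orthogonal {p : ℝ[X]} {n : ℕ}
    (horth : ∀ i < n, ∫ t in (-1 : ℝ)..1, t ^ i * p.eval t = 0) {x : ℝ} (hx : 1 < x) :
    ∫ t in (-1 : ℝ)..1, p.eval t * (x - t)⁻¹ =
      (x ^ n)⁻¹ * ∫ t in (-1 : ℝ)..1, t ^ n * p.eval t * (x - t)⁻¹ := by
  have hsplit : ∀ t ∈ Set.uIcc (-1 : ℝ) 1, p.eval t * (x - t)⁻¹ =
      ∑ i ∈ range n, t ^ i * p.eval t / x ^ (i + 1) +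
        (x ^ n)⁻¹ * (t ^ n * p.eval t * (x - t)⁻¹) := by
    intro t ht
    rw [Set.uIcc_of_le (by norm_num)] at ht
    conv_lhs => rw [inv_sub_eq_sum_add (by positivity) (by linarith [ht.2]) n]
    rw [mul_add, mul_sum]
    congr 1
    · exact sum_congr rfl fun i _ ↦ by ring
    · ring
  rw [intervalIntegral.integral_congr hsplit,
    intervalIntegral.integral_add ((by fun_prop : Continuous _).intervalIntegrable _ _)
      ((intervalIntegrable_mul_inv_sub (by fun_prop) hx).const_mul _),
    intervalIntegral.integral_finsetSum
      fun i _ ↦ (by fun_prop : Continuous _).intervalIntegrable _ _]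
  simp only [intervalIntegral.integral_div, intervalIntegral.integral_const_mul]
  rw [sum_eq_zero fun i hi ↦ by rw [horth i (mem_range.1 hi), zero_div], zero_add]

theorem exists_logPade_of_orthogonal {p : ℝ[X]} {n : ℕ} (hp : p.natDegree ≤ n)
    (horth : ∀ i < n, ∫ t in (-1 : ℝ)..1, t ^ i * p.eval t = 0) :
    ∃ Q : ℝ[X], Q.degree < n ∧ ∃ C : ℝ, 0 ≤ C ∧ ∀ x : ℝ, 2 ≤ x →
      |p.eval x * ((1 / 2) * Real.log ((x + 1) / (x - 1))) - Q.eval x| ≤ C / x ^ (n + 1) := by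
  obtain ⟨M, hM⟩ := (isCompact_Icc (a := (-1 : ℝ)) (b := 1)).exists_bound_of_continuousOn
    (f := fun t ↦ t ^ n * p.eval t) (by fun_prop)
  have hM0 : 0 ≤ M := (norm_nonneg _).trans (hM 0 (by norm_num))
  refine ⟨logPadeNumerator p n, degree_logPadeNumerator_lt p n, 2 * M, by positivity,
    fun x hx ↦ ?_⟩
  have hx1 : 1 < x := by linarith
  have hxn : 0 < x ^ n := by positivity
  have hremainder : p.eval x * ((1 / 2) * Real.log ((x + 1) / (x - 1))) -
      (logPadeNumerator p n).eval x =
        2⁻¹ * (x ^ n)⁻¹ * ∫ t in (-1 : ℝ)..1, t ^ n * p.eval t * (x - t)⁻¹ := by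
    rw [Real.log_div_eq_integral_inv_sub hx1, mul_left_comm, eval_mul_integral_inv_sub hp hx1,
      integral_eval_mul_inv_sub_of_orthogonal horth hx1]
    ring
  have hintegral := abs_integral_mul_inv_sub_le hM hx1
  rw [hremainder, abs_mul, abs_mul, abs_of_pos (by norm_num : (0 : ℝ) < 2⁻¹),
    abs_of_pos (inv_pos.2 hxn)]
  calc 2⁻¹ * (x ^ n)⁻¹ * |∫ t in (-1 : ℝ)..1, t ^ n * p.eval t * (x - t)⁻¹|
      ≤ 2⁻¹ * (x ^ n)⁻¹ * (2 * M / (x - 1)) := by gcongr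
    _ = M / (x ^ n * (x - 1)) := by field_simp
    _ ≤ M / (x ^ n * (x / 2)) := by gcongr; linarith
    _ = 2 * M / x ^ (n + 1) := by field_simp; ring

open Polynomial in
/-- Chebyshev's theorem, proved by Hermite in his letter of May 31, 1885, in the
form of the Padé approximation property of the Legendre polynomial
`P = (1/(2^n n!)) Dⁿ((X²-1)ⁿ)`: there are a polynomial `Q` of degree `< n` and a
constant `C ≥ 0` with `|P(x)·½ log((x+1)/(x-1)) - Q(x)| ≤ C/x^(n+1)` for `x ≥ 2`. -/
theorem legendre_pade_log (n : ℕ)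
    (P : Polynomial ℝ)
    (hP : P = Polynomial.C (1 / (2 ^ n * (Nat.factorial n : ℝ))) *
      (Polynomial.derivative^[n] ((Polynomial.X ^ 2 - 1) ^ n))) :
    ∃ Q : Polynomial ℝ, Q.degree < n ∧ ∃ C : ℝ, 0 ≤ C ∧
      ∀ x : ℝ, 2 ≤ x →
        |P.eval x * ((1 / 2) * Real.log ((x + 1) / (x - 1))) - Q.eval x| ≤
          C / x ^ (n + 1) := by
  subst hP
  apply exists_logPade_of_orthogonal
  · exact (natDegree_C_mul_le _ _).trans (natDegree_iterate_derivative_X_sq_sub_one_pow_le n)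
  · intro i hi
    simp_rw [eval_mul, eval_C, mul_left_comm _ (1 / _ : ℝ), intervalIntegral.integral_const_mul,
      integral_pow_mul_iterate_derivative_X_sq_sub_one_pow_eq_zero hi, mul_zero]
end

section
/- Let a ≤ b be real numbers and let φ, ψ : ℝ → ℝ be continuous functions. Then (∫_a^b φ(x)² dx)·(∫_a^b ψ(x)² dx) − (∫_a^b φ(x)·ψ(x) dx)² = ∫_a^b ( ∫_x^b (φ(x)·ψ(y) − φ(y)·ψ(x))² dy ) dx. -/
/-!
With `R, S, T` the tail integrals `∫_u^b` of `φ²`, `ψ²`, `φψ`, the Gram determinant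
`G = R S - T²` vanishes at `u = b`, and expanding the square shows that `-G'(x)` is exactly the
inner integral `∫_x^b (φ(x)ψ(y) - φ(y)ψ(x))² dy`. The identity is the fundamental theorem of
calculus for `G` on `[a, b]`.
-/

open intervalIntegral

theorem hasDerivAt_integral_tail {E : Type*} [NormedAddCommGroup E] [NormedSpace ℝ E]
    [CompleteSpace E] {f : ℝ → E} (hf : Continuous f) (b x : ℝ) :
    HasDerivAt (fun u => ∫ t in u..b, f t) (-f x) x :=
  integral_hasDerivAt_left (hf.intervalIntegrable _ _) (hf.stronglyMeasurableAtFilter _ _)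
    hf.continuousAt

theorem continuous_integral_tail {E : Type*} [NormedAddCommGroup E] [NormedSpace ℝ E]
    [CompleteSpace E] {f : ℝ → E} (hf : Continuous f) (b : ℝ) :
    Continuous fun u => ∫ t in u..b, f t :=
  continuous_iff_continuousAt.mpr fun x => (hasDerivAt_integral_tail hf b x).continuousAt

section Gram

variable {φ ψ : ℝ → ℝ}

theorem integral_sq_mul_sub_mul {μ : MeasureTheory.Measure ℝ} {x b : ℝ}
    (hφ : IntervalIntegrable (fun y => φ y ^ 2) μ x b)
    (hψ : IntervalIntegrable (fun y => ψ y ^ 2) μ x b)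
    (hφψ : IntervalIntegrable (fun y => φ y * ψ y) μ x b) (c d : ℝ) :
    ∫ y in x..b, (c * ψ y - φ y * d) ^ 2 ∂μ =
      c ^ 2 * (∫ y in x..b, ψ y ^ 2 ∂μ) + d ^ 2 * (∫ y in x..b, φ y ^ 2 ∂μ) -
        2 * (c * d) * ∫ y in x..b, φ y * ψ y ∂μ := by
  have expand : ∀ y, (c * ψ y - φ y * d) ^ 2 =
      c ^ 2 * ψ y ^ 2 + d ^ 2 * φ y ^ 2 - 2 * (c * d) * (φ y * ψ y) := fun y => by ring
  simp_rw [expand]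
  rw [integral_sub ((hψ.const_mul _).add (hφ.const_mul _)) (hφψ.const_mul _),
    integral_add (hψ.const_mul _) (hφ.const_mul _), integral_const_mul, integral_const_mul,
    integral_const_mul]

/-- The Gram determinant of `φ` and `ψ` in `L²(u, b)`. -/
noncomputable def tailGram (φ ψ : ℝ → ℝ) (b u : ℝ) : ℝ :=
  (∫ t in u..b, φ t ^ 2) * (∫ t in u..b, ψ t ^ 2) - (∫ t in u..b, φ t * ψ t) ^ 2

@[simp]
theorem tailGram_self (φ ψ : ℝ → ℝ) (b : ℝ) : tailGram φ ψ b b = 0 := by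
  simp [tailGram]

variable (hφ : Continuous φ) (hψ : Continuous ψ)
include hφ hψ

theorem integral_sq_mul_sub_mul_of_continuous (b x : ℝ) :
    ∫ y in x..b, (φ x * ψ y - φ y * ψ x) ^ 2 =
      φ x ^ 2 * (∫ y in x..b, ψ y ^ 2) + ψ x ^ 2 * (∫ y in x..b, φ y ^ 2) -
        2 * (φ x * ψ x) * ∫ y in x..b, φ y * ψ y :=
  integral_sq_mul_sub_mul ((hφ.pow 2).intervalIntegrable _ _)
    ((hψ.pow 2).intervalIntegrable _ _) ((hφ.mul hψ).intervalIntegrable _ _) _ _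

theorem hasDerivAt_tailGram (b x : ℝ) :
    HasDerivAt (tailGram φ ψ b) (-∫ y in x..b, (φ x * ψ y - φ y * ψ x) ^ 2) x := by
  have hR := hasDerivAt_integral_tail (f := fun t => φ t ^ 2) (by fun_prop) b x
  have hS := hasDerivAt_integral_tail (f := fun t => ψ t ^ 2) (by fun_prop) b x
  have hT := hasDerivAt_integral_tail (f := fun t => φ t * ψ t) (by fun_prop) b x
  rw [integral_sq_mul_sub_mul_of_continuous hφ hψ]
  exact ((hR.mul hS).sub (hT.pow 2)).congr_deriv (by push_cast; ring)

theorem continuous_integral_sq_mul_sub_mul (b : ℝ) :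
    Continuous fun x => ∫ y in x..b, (φ x * ψ y - φ y * ψ x) ^ 2 := by
  simp_rw [integral_sq_mul_sub_mul_of_continuous hφ hψ]
  have := continuous_integral_tail (hφ.pow 2) b
  have := continuous_integral_tail (hψ.pow 2) b
  have := continuous_integral_tail (hφ.mul hψ) b
  fun_prop

end Gram

theorem teixeira_integral_identity_general (a b : ℝ) (φ ψ : ℝ → ℝ)
    (hφ : Continuous φ) (hψ : Continuous ψ) :
    (∫ x in a..b, φ x ^ 2) * (∫ x in a..b, ψ x ^ 2) -
        (∫ x in a..b, φ x * ψ x) ^ 2 =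
      ∫ x in a..b, ∫ y in x..b, (φ x * ψ y - φ y * ψ x) ^ 2 := by
  have ftc := integral_eq_sub_of_hasDerivAt (fun x _ => hasDerivAt_tailGram hφ hψ b x)
    ((continuous_integral_sq_mul_sub_mul hφ hψ b).neg.intervalIntegrable a b)
  rw [integral_neg, tailGram_self, zero_sub, neg_inj] at ftc
  exact ftc.symm

/-- Gomes Teixeira's integral identity (Hermite's letter of November 16, 1888). -/
theorem teixeira_integral_identity (a b : ℝ) (hab : a ≤ b) (φ ψ : ℝ → ℝ)
    (hφ : Continuous φ) (hψ : Continuous ψ) :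
    (∫ x in a..b, φ x ^ 2) * (∫ x in a..b, ψ x ^ 2) -
        (∫ x in a..b, φ x * ψ x) ^ 2 =
      ∫ x in a..b, ∫ y in x..b, (φ x * ψ y - φ y * ψ x) ^ 2 :=
  teixeira_integral_identity_general a b φ ψ hφ hψ
end

section
/- Let a < b be real numbers and let φ, ψ : ℝ → ℝ be continuous functions. If there exist points x, y in the closed interval [a,b] with φ(x)·ψ(y) ≠ φ(y)·ψ(x), then (∫_a^b φ(x)·ψ(x) dx)² < (∫_a^b φ(x)² dx)·(∫_a^b ψ(x)² dx). -/
/-!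
Expanding `∫ (s φ + t ψ)² ≥ 0` gives a positive semidefinite binary quadratic form
`s² ∫φ² + 2st ∫φψ + t² ∫ψ²` whose discriminant is `(∫φψ)² - ∫φ² ∫ψ²`. The hypothesis
`φ(x)ψ(y) ≠ φ(y)ψ(x)` says that no nontrivial combination `s φ + t ψ` vanishes at both `x`
and `y`, so by continuity its square has positive integral: the form is positive definite
and its discriminant is negative.
-/

lemma sq_lt_mul_of_quadratic_form_pos {K : Type*} [CommRing K] [LinearOrder K]
    [IsStrictOrderedRing K] {A B C : K}
    (h : ∀ s t : K, s ≠ 0 ∨ t ≠ 0 → 0 < s ^ 2 * A + 2 * s * t * C + t ^ 2 * B) :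
    C ^ 2 < A * B := by
  have hA : 0 < A := by simpa using h 1 0 (Or.inl one_ne_zero)
  have hAC : 0 < A * (A * B - C ^ 2) := by
    have := h (-C) A (Or.inr hA.ne')
    linarith
  linarith [pos_of_mul_pos_right hAC hA.le]

lemma eq_zero_and_eq_zero_of_det_ne_zero {R : Type*} [CommRing R] [NoZeroDivisors R]
    {p q r u s t : R} (hdet : p * u ≠ r * q)
    (h₁ : s * p + t * q = 0) (h₂ : s * r + t * u = 0) : s = 0 ∧ t = 0 := by
  have hdet' : p * u - r * q ≠ 0 := sub_ne_zero.mpr hdet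
  have hs : s * (p * u - r * q) = 0 := by linear_combination u * h₁ - q * h₂
  have ht : t * (p * u - r * q) = 0 := by linear_combination p * h₂ - r * h₁
  exact ⟨(mul_eq_zero.mp hs).resolve_right hdet', (mul_eq_zero.mp ht).resolve_right hdet'⟩

open intervalIntegral in
lemma integral_linear_combination_sq {μ : MeasureTheory.Measure ℝ} {a b : ℝ} {f g : ℝ → ℝ}
    (hf : IntervalIntegrable (fun x => f x ^ 2) μ a b)
    (hfg : IntervalIntegrable (fun x => f x * g x) μ a b)
    (hg : IntervalIntegrable (fun x => g x ^ 2) μ a b) (s t : ℝ) :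
    ∫ x in a..b, (s * f x + t * g x) ^ 2 ∂μ =
      s ^ 2 * (∫ x in a..b, f x ^ 2 ∂μ) + 2 * s * t * (∫ x in a..b, f x * g x ∂μ) +
        t ^ 2 * (∫ x in a..b, g x ^ 2 ∂μ) := by
  have hexpand : ∀ x, (s * f x + t * g x) ^ 2 =
      s ^ 2 * f x ^ 2 + 2 * s * t * (f x * g x) + t ^ 2 * g x ^ 2 := fun x => by ring
  simp_rw [hexpand]
  rw [integral_add ((hf.const_mul _).add (hfg.const_mul _)) (hg.const_mul _),
    integral_add (hf.const_mul _) (hfg.const_mul _),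
    integral_const_mul, integral_const_mul, integral_const_mul]

lemma integral_sq_pos_of_exists_ne_zero {a b : ℝ} (hab : a < b) {f : ℝ → ℝ}
    (hf : Continuous f) (h : ∃ x ∈ Set.Icc a b, f x ≠ 0) :
    0 < ∫ x in a..b, f x ^ 2 := by
  obtain ⟨x, hx, hfx⟩ := h
  exact intervalIntegral.integral_pos hab (hf.pow 2).continuousOn
    (fun y _ => sq_nonneg (f y)) ⟨x, hx, sq_pos_of_ne_zero hfx⟩

/-- Teixeira's strict Cauchy–Schwarz inequality (Hermite's letter of
November 22, 1888): if `φ(x)ψ(y) ≠ φ(y)ψ(x)` for some `x, y ∈ [a,b]`, then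
`(∫φψ)² < ∫φ² · ∫ψ²`. -/
theorem teixeira_strict_inequality (a b : ℝ) (hab : a < b) (φ ψ : ℝ → ℝ)
    (hφ : Continuous φ) (hψ : Continuous ψ)
    (h : ∃ x ∈ Set.Icc a b, ∃ y ∈ Set.Icc a b, φ x * ψ y ≠ φ y * ψ x) :
    (∫ x in a..b, φ x * ψ x) ^ 2 <
      (∫ x in a..b, φ x ^ 2) * (∫ x in a..b, ψ x ^ 2) := by
  obtain ⟨x, hx, y, hy, hxy⟩ := h
  apply sq_lt_mul_of_quadratic_form_pos
  intro s t hst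
  rw [← integral_linear_combination_sq ((hφ.pow 2).intervalIntegrable a b)
    ((hφ.mul hψ).intervalIntegrable a b) ((hψ.pow 2).intervalIntegrable a b)]
  refine integral_sq_pos_of_exists_ne_zero hab (by fun_prop) ?_
  by_contra! hvanish
  obtain ⟨rfl, rfl⟩ :=
    eq_zero_and_eq_zero_of_det_ne_zero hxy (hvanish x hx) (hvanish y hy)
  simp at hst
end

section
/- For every complex number z with nonzero imaginary part, ∫_0^π cot(t − z) dt = i·π if Im(z) > 0, and ∫_0^π cot(t − z) dt = −i·π if Im(z) < 0, where the integral is taken over the real variable t ∈ [0, π]. -/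
/-!
On the lower half-plane put `q = exp (-2 i w)`, so that `‖q‖ < 1` and
`cot w = i (1 + q) / (1 - q) = i + 2 i q / (1 - q)`. Hence `i w + log (1 - q)` is a primitive of
`cot` there, with `1 - q` staying in the slit plane where `log` is holomorphic. Translating `w`
by `π` leaves `q` unchanged and adds `i π` to `i w`, which gives `∫ cot (t - z) = i π` over any
period when `Im z > 0`. The case `Im z < 0` follows by complex conjugation.
-/

open Complex ComplexConjugate
open scoped Real

namespace Complex

theorem sin_ne_zero_of_im_ne_zero {w : ℂ} (h : w.im ≠ 0) : sin w ≠ 0 := by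
  rw [sin_ne_zero_iff]
  rintro k rfl
  simp at h

theorem cot_eq_I_mul_one_add_div_one_sub (w : ℂ) :
    cot w = I * (1 + exp (-2 * I * w)) / (1 - exp (-2 * I * w)) := by
  have hv : exp (-(w * I)) ≠ 0 := exp_ne_zero _
  have huv : exp (w * I) * exp (-(w * I)) = 1 := by rw [← exp_add]; simp
  have hq : exp (-2 * I * w) = exp (-(w * I)) * exp (-(w * I)) := by
    rw [← exp_add]; ring_nf
  rw [cot_eq_cos_div_sin, cos, sin, hq]
  calc _ = I * (exp (w * I) + exp (-(w * I))) / (exp (w * I) - exp (-(w * I))) := by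
        rw [div_div_div_cancel_right₀ two_ne_zero, neg_mul, ← neg_sub, neg_mul, div_neg, mul_comm,
          ← div_div, div_I]
        ring
    _ = _ := by
        rw [← mul_div_mul_right _ _ hv]
        congr 1
        · linear_combination I * huv
        · linear_combination huv

theorem continuous_cot_ofReal_sub {z : ℂ} (hz : z.im ≠ 0) :
    Continuous fun t : ℝ ↦ cot (t - z) := by
  simp only [cot_eq_cos_div_sin]
  exact Continuous.div (by fun_prop) (by fun_prop)
    fun t ↦ sin_ne_zero_of_im_ne_zero (by simpa using hz)

noncomputable def cotPrimitive (w : ℂ) : ℂ := I * w + log (1 - exp (-2 * I * w))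

theorem one_sub_exp_neg_two_I_mul_mem_slitPlane {w : ℂ} (hw : w.im < 0) :
    1 - exp (-2 * I * w) ∈ slitPlane := by
  rw [sub_eq_add_neg]
  refine mem_slitPlane_of_norm_lt_one ?_
  rw [norm_neg, norm_exp, Real.exp_lt_one_iff]
  have : (-2 * I * w).re = 2 * w.im := by simp
  rw [this]
  linarith

theorem hasDerivAt_cotPrimitive {w : ℂ} (hw : w.im < 0) :
    HasDerivAt cotPrimitive (cot w) w := by
  have hq : HasDerivAt (fun w ↦ 1 - exp (-2 * I * w)) (-(exp (-2 * I * w) * (-2 * I))) w :=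
    (((hasDerivAt_id w).const_mul (-2 * I)).cexp).const_sub 1 |>.congr_deriv (by simp)
  refine (((hasDerivAt_id' w).const_mul I).add
    (hq.clog (one_sub_exp_neg_two_I_mul_mem_slitPlane hw))).congr_deriv ?_
  have hne : 1 - exp (-2 * I * w) ≠ 0 :=
    slitPlane_ne_zero (one_sub_exp_neg_two_I_mul_mem_slitPlane hw)
  rw [cot_eq_I_mul_one_add_div_one_sub]
  generalize exp (-2 * I * w) = q at hne ⊢
  field_simp
  ring

theorem cotPrimitive_add_pi (w : ℂ) : cotPrimitive (w + π) = cotPrimitive w + I * π := by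
  have : exp (-2 * I * (w + π)) = exp (-2 * I * w) := by
    rw [show -2 * I * (w + π) = -2 * I * w - 2 * π * I by ring, exp_periodic.sub_eq]
  simp only [cotPrimitive, this]
  ring

theorem integral_cot_ofReal_sub_of_im_pos (a : ℝ) {z : ℂ} (hz : 0 < z.im) :
    ∫ t in a..a + π, cot (t - z) = I * π := by
  have hderiv (t : ℝ) : HasDerivAt (fun t : ℝ ↦ cotPrimitive (t - z)) (cot (t - z)) t :=
    ((hasDerivAt_cotPrimitive (by simpa using hz)).comp_sub_const _ z).comp_ofReal
  rw [intervalIntegral.integral_eq_sub_of_hasDerivAt (fun t _ ↦ hderiv t)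
    ((continuous_cot_ofReal_sub hz.ne').intervalIntegrable _ _)]
  simp only [ofReal_add, add_sub_right_comm, cotPrimitive_add_pi]
  ring

theorem integral_cot_ofReal_sub_of_im_neg (a : ℝ) {z : ℂ} (hz : z.im < 0) :
    ∫ t in a..a + π, cot (t - z) = -(I * π) := by
  have h := integral_cot_ofReal_sub_of_im_pos a (z := conj z) (by simpa using hz)
  have hconj : ∫ t in a..a + π, cot (t - conj z) = conj (∫ t in a..a + π, cot (t - z)) := by
    simp_rw [← intervalIntegral.intervalIntegral_conj, ← cot_conj, map_sub, conj_ofReal]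
  rw [hconj] at h
  simpa using congr_arg conj h

end Complex

open Complex in
theorem integral_cot_sub_general (z : ℂ) :
    (0 < z.im → (∫ t in (0:ℝ)..Real.pi, Complex.cot ((t : ℂ) - z)) =
      Complex.I * Real.pi) ∧
    (z.im < 0 → (∫ t in (0:ℝ)..Real.pi, Complex.cot ((t : ℂ) - z)) =
      -(Complex.I * Real.pi)) :=
  ⟨fun h ↦ by simpa only [zero_add] using integral_cot_ofReal_sub_of_im_pos 0 h,
    fun h ↦ by simpa only [zero_add] using integral_cot_ofReal_sub_of_im_neg 0 h⟩

open Complex in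
/-- Hermite's evaluation of `∫₀^π cot(x - a - ib) dx` (letter of March 1890):
the integral is `iπ` if `Im z > 0` and `-iπ` if `Im z < 0`. -/
theorem integral_cot_sub (z : ℂ) (hz : z.im ≠ 0) :
    (0 < z.im → (∫ t in (0:ℝ)..Real.pi, Complex.cot ((t : ℂ) - z)) =
      Complex.I * Real.pi) ∧
    (z.im < 0 → (∫ t in (0:ℝ)..Real.pi, Complex.cot ((t : ℂ) - z)) =
      -(Complex.I * Real.pi)) :=
  integral_cot_sub_general z
end

section
/- For every positive integer n and every complex number z with sin(n·z) ≠ 0, cot(n·z) = (1/n)·Σ_{k=0}^{n−1} cot(z + k·π/n). -/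
/-!
Put `q = exp (2 i z)` and `ω = exp (2 π i / n)`. Then
`cot (z + k π / n) = (q ω^k + 1) / (i (1 - q ω^k))`, so the identity is the partial
fraction sum `∑_{k<n} (1 - q ω^k)⁻¹ = n / (1 - q^n)` over the `n`-th roots of unity.
Since `(q ω^k)^n = q^n`, each term is the geometric sum `(∑_{m<n} q^m ω^{km}) / (1 - q^n)`,
and after exchanging the sums only `m = 0` survives, because `∑_{k<n} ω^{km} = 0`
for `0 < m < n`.
-/

open Complex Finset
open scoped Real

namespace IsPrimitiveRoot

variable {K : Type*} [Field K] {ζ q : K} {n : ℕ}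

theorem sum_pow_pow_eq_zero (hζ : IsPrimitiveRoot ζ n) {m : ℕ} (hm : m ≠ 0) (hmn : m < n) :
    ∑ k ∈ range n, (ζ ^ m) ^ k = 0 := by
  rw [geom_sum_eq (hζ.pow_ne_one_of_pos_of_lt hm hmn), pow_right_comm, hζ.pow_eq_one, one_pow,
    sub_self, zero_div]

theorem mul_pow_pow_eq (hζ : IsPrimitiveRoot ζ n) (q : K) (k : ℕ) : (q * ζ ^ k) ^ n = q ^ n := by
  rw [mul_pow, pow_right_comm, hζ.pow_eq_one, one_pow, mul_one]

theorem one_sub_mul_pow_ne_zero (hζ : IsPrimitiveRoot ζ n) (hq : q ^ n ≠ 1) (k : ℕ) :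
    1 - q * ζ ^ k ≠ 0 :=
  sub_ne_zero.mpr fun h ↦ hq (by rw [← hζ.mul_pow_pow_eq q k, ← h, one_pow])

theorem sum_inv_one_sub_mul_pow (hζ : IsPrimitiveRoot ζ n) (hq : q ^ n ≠ 1) :
    ∑ k ∈ range n, (1 - q * ζ ^ k)⁻¹ = n * (1 - q ^ n)⁻¹ := by
  have hgeom (k : ℕ) :
      (1 - q * ζ ^ k)⁻¹ = (∑ m ∈ range n, q ^ m * (ζ ^ m) ^ k) * (1 - q ^ n)⁻¹ := by
    simp_rw [pow_right_comm ζ _ k, ← mul_pow]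
    rw [eq_mul_inv_iff_mul_eq₀ (sub_ne_zero.mpr hq.symm), ← hζ.mul_pow_pow_eq q k,
      ← mul_neg_geom_sum, inv_mul_cancel_left₀ (hζ.one_sub_mul_pow_ne_zero hq k)]
  have hswap : ∑ m ∈ range n, ∑ k ∈ range n, q ^ m * (ζ ^ m) ^ k = n := by
    rcases n.eq_zero_or_pos with rfl | hn
    · simp
    rw [sum_eq_single_of_mem 0 (mem_range.mpr hn)]
    · simp
    · intro m hm hm0
      rw [← mul_sum, hζ.sum_pow_pow_eq_zero hm0 (mem_range.mp hm), mul_zero]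
  simp_rw [hgeom, ← sum_mul]
  rw [sum_comm, hswap]

theorem sum_add_one_div_one_sub_mul_pow (hζ : IsPrimitiveRoot ζ n) (hq : q ^ n ≠ 1) :
    ∑ k ∈ range n, (q * ζ ^ k + 1) / (1 - q * ζ ^ k) = n * ((q ^ n + 1) / (1 - q ^ n)) := by
  have hterm (k : ℕ) : (q * ζ ^ k + 1) / (1 - q * ζ ^ k) = 2 * (1 - q * ζ ^ k)⁻¹ - 1 := by
    have hx := hζ.one_sub_mul_pow_ne_zero hq k
    field_simp
    ring
  simp_rw [hterm]
  rw [sum_sub_distrib, ← mul_sum, hζ.sum_inv_one_sub_mul_pow hq, sum_const, card_range,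
    nsmul_one]
  field_simp [sub_ne_zero.mpr hq.symm]
  ring

end IsPrimitiveRoot

namespace Complex

theorem exp_two_mul_I_mul_ne_one {w : ℂ} (hw : sin w ≠ 0) : exp (2 * I * w) ≠ 1 := by
  rw [Ne, exp_eq_one_iff]
  rintro ⟨j, hj⟩
  have h2I : 2 * I ≠ 0 := by simp
  refine hw (sin_eq_zero_iff.mpr ⟨j, mul_left_cancel₀ h2I ?_⟩)
  rw [hj]
  ring

theorem exp_two_mul_I_mul_add_nat_mul_pi_div (z : ℂ) (n k : ℕ) (hn : n ≠ 0) :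
    exp (2 * I * (z + k * π / n)) = exp (2 * I * z) * exp (2 * π * I / n) ^ k := by
  rw [← exp_nat_mul, ← exp_add]
  congr 1
  field_simp

end Complex

/-- The trigonometric multiplication relation used by Hermite (letter of March 1890):
`cot(nz) = (1/n) ∑_{k=0}^{n-1} cot(z + kπ/n)`. -/
theorem cot_nmul_eq_sum (n : ℕ) (hn : 0 < n) (z : ℂ)
    (hz : Complex.sin (n * z) ≠ 0) :
    Complex.cot (n * z) =
      (1 / n) * ∑ k ∈ Finset.range n, Complex.cot (z + k * Real.pi / n) := by
  set q := exp (2 * I * z)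
  have hω := isPrimitiveRoot_exp n hn.ne'
  have hqn : q ^ n = exp (2 * I * (n * z)) := by rw [← exp_nat_mul, mul_left_comm]
  have hq : q ^ n ≠ 1 := hqn ▸ exp_two_mul_I_mul_ne_one hz
  have hterm (k : ℕ) : cot (z + k * π / n) =
      (q * exp (2 * π * I / n) ^ k + 1) / (1 - q * exp (2 * π * I / n) ^ k) / I := by
    rw [cot_eq_exp_ratio, div_mul_eq_div_div_swap,
      exp_two_mul_I_mul_add_nat_mul_pi_div z n k hn.ne']
  simp_rw [hterm, ← sum_div, hω.sum_add_one_div_one_sub_mul_pow hq, cot_eq_exp_ratio,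
    div_mul_eq_div_div_swap, ← hqn]
  rw [mul_div_assoc, one_div, inv_mul_cancel_left₀ (Nat.cast_ne_zero.mpr hn.ne')]
end

section
/- Let c ∈ ℂ, R > 0, and let f : ℂ → ℂ be complex-differentiable on the closed disc of centre c and radius R. Let a_1, …, a_m be distinct points of the open disc of centre c and radius R, let α_1, …, α_m be positive integers, and set n = α_1 + ⋯ + α_m. Suppose F ∈ ℂ[X] is a polynomial with degree of F strictly less than n such that for every i and every j with 0 ≤ j ≤ α_i − 1, the j-th derivative of (the evaluation of) F at a_i equals the j-th derivative of f at a_i. Then for every x in the open disc of centre c and radius R, F(x) − f(x) = (1/(2πi))·∮_{|z−c|=R} f(z)·∏_{i=1}^m (x − a_i)^{α_i} / ( (x − z)·∏_{i=1}^m (z − a_i)^{α_i} ) dz, where the contour integral is taken over the circle of centre c and radius R traversed counterclockwise. -/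
/-!
Write `ω(z) = ∏ i, (z - a i) ^ α i`. The interpolation conditions say that `f - F` vanishes to
order `α i` at `a i`, so `f - F = ω g` with `g` holomorphic on the closed disc. On the circle the
integrand is then `-ω(x) (F(z) / ((z - x) ω(z)) + g(z) / (z - x))`. The first term integrates to
zero, because `deg F + 1 < deg ((X - x) ω)`: the integral does not change when the circle is
enlarged and tends to zero as the radius grows. The second term gives `2πi g(x)` by Cauchy's
formula, and `-ω(x) g(x) = F(x) - f(x)`.
-/

open Filter Topology Metric Complex Real Bornology Polynomial

section Factorization

variable {𝕜 E : Type*} [NontriviallyNormedField 𝕜] [NormedAddCommGroup E] [NormedSpace 𝕜 E]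
  {h g : 𝕜 → E} {b w : 𝕜} {n : ℕ}

theorem AnalyticAt.exists_analyticAt_eq_sub_pow_smul (hh : AnalyticAt 𝕜 h b)
    (hn : n ≤ analyticOrderAt h b) :
    ∃ g : 𝕜 → E, AnalyticAt 𝕜 g b ∧ ∀ z, h z = (z - b) ^ n • g z := by
  classical
  obtain ⟨g₀, hg₀, hhg₀⟩ := (natCast_le_analyticOrderAt hh).mp hn
  refine ⟨Function.update (fun z => ((z - b) ^ n)⁻¹ • h z) b (g₀ b), ?_, fun z => ?_⟩
  · refine hg₀.congr ?_
    filter_upwards [hhg₀] with z hz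
    rcases eq_or_ne z b with rfl | hzb
    · simp
    · rw [Function.update_of_ne hzb, hz, inv_smul_smul₀ (pow_ne_zero _ (sub_ne_zero.mpr hzb))]
  · rcases eq_or_ne z b with rfl | hzb
    · simpa using hhg₀.self_of_nhds
    · rw [Function.update_of_ne hzb, smul_inv_smul₀ (pow_ne_zero _ (sub_ne_zero.mpr hzb))]

theorem eventuallyEq_inv_smul_of_eq_sub_pow_smul (hhg : ∀ z, h z = (z - b) ^ n • g z)
    (hw : w ≠ b) : g =ᶠ[𝓝 w] fun z => ((z - b) ^ n)⁻¹ • h z := by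
  filter_upwards [eventually_ne_nhds hw] with z hz
  rw [hhg, inv_smul_smul₀ (pow_ne_zero _ (sub_ne_zero.mpr hz))]

theorem differentiableAt_of_eq_sub_pow_smul (hhg : ∀ z, h z = (z - b) ^ n • g z) (hw : w ≠ b)
    (hh : DifferentiableAt 𝕜 h w) : DifferentiableAt 𝕜 g w :=
  (eventuallyEq_inv_smul_of_eq_sub_pow_smul hhg hw).differentiableAt_iff.mpr <|
    (((differentiableAt_id.sub_const b).pow n).inv (pow_ne_zero _ (sub_ne_zero.mpr hw))).smul hh

theorem analyticAt_of_eq_sub_pow_smul (hhg : ∀ z, h z = (z - b) ^ n • g z) (hw : w ≠ b)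
    (hh : AnalyticAt 𝕜 h w) : AnalyticAt 𝕜 g w := by
  refine AnalyticAt.congr ?_ (eventuallyEq_inv_smul_of_eq_sub_pow_smul hhg hw).symm
  fun_prop (disch := exact pow_ne_zero _ (sub_ne_zero.mpr hw))

theorem analyticOrderAt_eq_of_eq_sub_pow_smul (hhg : ∀ z, h z = (z - b) ^ n • g z) (hw : w ≠ b)
    (hh : AnalyticAt 𝕜 h w) : analyticOrderAt g w = analyticOrderAt h w := by
  have hu : AnalyticAt 𝕜 (fun z => ((z - b) ^ n)⁻¹) w := by
    fun_prop (disch := exact pow_ne_zero _ (sub_ne_zero.mpr hw))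
  have hu₀ : analyticOrderAt (fun z => ((z - b) ^ n)⁻¹) w = 0 :=
    analyticOrderAt_eq_zero.mpr (.inr (by simp [sub_ne_zero.mpr hw]))
  rw [analyticOrderAt_congr (eventuallyEq_inv_smul_of_eq_sub_pow_smul hhg hw)]
  exact (analyticOrderAt_smul hu hh).trans (by rw [hu₀, zero_add])

theorem exists_eq_prod_sub_pow_smul {ι : Type*} {s : Finset ι} {a : ι → 𝕜}
    (ha : Set.InjOn a s) {α : ι → ℕ} (hh : ∀ i ∈ s, AnalyticAt 𝕜 h (a i))
    (hα : ∀ i ∈ s, α i ≤ analyticOrderAt h (a i)) :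
    ∃ g : 𝕜 → E, (∀ w, DifferentiableAt 𝕜 h w → DifferentiableAt 𝕜 g w) ∧
      ∀ z, h z = (∏ i ∈ s, (z - a i) ^ α i) • g z := by
  classical
  induction s using Finset.induction_on generalizing h with
  | empty => exact ⟨h, fun _ => id, by simp⟩
  | insert j s hj ih =>
    obtain ⟨g₁, hg₁, hhg₁⟩ := (hh j (s.mem_insert_self j)).exists_analyticAt_eq_sub_pow_smul
      (hα j (s.mem_insert_self j))
    have hne : ∀ i ∈ s, a i ≠ a j := fun i hi hij =>
      hj (ha (s.mem_insert_of_mem hi) (s.mem_insert_self j) hij ▸ hi)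
    obtain ⟨g, hg, hg₁g⟩ := ih (ha.mono (by simp))
      (fun i hi => analyticAt_of_eq_sub_pow_smul hhg₁ (hne i hi) (hh i (s.mem_insert_of_mem hi)))
      (fun i hi => analyticOrderAt_eq_of_eq_sub_pow_smul hhg₁ (hne i hi)
        (hh i (s.mem_insert_of_mem hi)) ▸ hα i (s.mem_insert_of_mem hi))
    refine ⟨g, fun w hw => hg w ?_, fun z => ?_⟩
    · rcases eq_or_ne w (a j) with rfl | hwj
      · exact hg₁.differentiableAt
      · exact differentiableAt_of_eq_sub_pow_smul hhg₁ hwj hw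
    · rw [hhg₁, hg₁g, Finset.prod_insert hj, mul_smul]

theorem natCast_le_analyticOrderAt_sub_of_iteratedDeriv_eq [CharZero 𝕜] [CompleteSpace E]
    {f : 𝕜 → E} (hf : AnalyticAt 𝕜 f b) (hg : AnalyticAt 𝕜 g b)
    (hfg : ∀ j < n, iteratedDeriv j f b = iteratedDeriv j g b) :
    n ≤ analyticOrderAt (f - g) b := by
  refine (natCast_le_analyticOrderAt_iff_iteratedDeriv_eq_zero (hf.sub hg)).mpr fun j hj => ?_
  rw [iteratedDeriv_sub hf.contDiffAt hg.contDiffAt, hfg j hj, sub_self]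

end Factorization

theorem exists_sub_eq_prod_mul_of_iteratedDeriv_eq {ι : Type*} [Fintype ι] {c : ℂ} {R : ℝ}
    {f p : ℂ → ℂ} (hf : ∀ w ∈ closedBall c R, DifferentiableAt ℂ f w)
    (hp : ∀ w ∈ closedBall c R, DifferentiableAt ℂ p w) {a : ι → ℂ}
    (ha : Function.Injective a) (haR : ∀ i, a i ∈ ball c R) {α : ι → ℕ}
    (hfp : ∀ i, ∀ j < α i, iteratedDeriv j f (a i) = iteratedDeriv j p (a i)) :
    ∃ g : ℂ → ℂ, DifferentiableOn ℂ g (closedBall c R) ∧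
      ∀ z, f z - p z = (∏ i, (z - a i) ^ α i) * g z := by
  have hanalytic : ∀ {u : ℂ → ℂ}, (∀ w ∈ closedBall c R, DifferentiableAt ℂ u w) →
      ∀ i, AnalyticAt ℂ u (a i) := fun hu i =>
    DifferentiableOn.analyticAt (fun w hw => (hu w hw).differentiableWithinAt)
      (closedBall_mem_nhds_of_mem (haR i))
  obtain ⟨g, hg, hfpg⟩ := exists_eq_prod_sub_pow_smul (s := Finset.univ) ha.injOn
    (fun i _ => (hanalytic hf i).sub (hanalytic hp i))
    (fun i _ => natCast_le_analyticOrderAt_sub_of_iteratedDeriv_eq (hanalytic hf i)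
      (hanalytic hp i) (hfp i))
  exact ⟨g, fun w hw => (hg w ((hf w hw).sub (hp w hw))).differentiableWithinAt, hfpg⟩

theorem circleIntegral_eq_zero_of_tendsto_cobounded {E : Type*} [NormedAddCommGroup E]
    [NormedSpace ℂ E] [CompleteSpace E] {c : ℂ} {R : ℝ} (hR : 0 < R) {φ : ℂ → E}
    (hd : ∀ z ∉ ball c R, DifferentiableAt ℂ φ z)
    (hlim : Tendsto (fun z => (z - c) • φ z) (cobounded ℂ) (𝓝 0)) :
    ∮ z in C(c, R), φ z = 0 := by
  have hradius : ∀ s, R ≤ s → ∮ z in C(c, s), φ z = ∮ z in C(c, R), φ z := fun s hs =>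
    circleIntegral_eq_of_differentiable_on_annulus_off_countable hR hs Set.countable_empty
      (fun z hz => (hd z hz.2).continuousAt.continuousWithinAt)
      (fun z hz => hd z fun hzR => hz.1.2 (ball_subset_closedBall hzR))
  refine norm_le_zero_iff.mp (le_of_forall_pos_le_add fun ε hε => ?_)
  obtain ⟨r, -, hr⟩ := (hasBasis_cobounded_compl_closedBall c).eventually_iff.mp
    (hlim.eventually (closedBall_mem_nhds 0 (div_pos hε two_pi_pos)))
  set s := max R (r + 1)
  have hs : 0 < s := hR.trans_le (le_max_left _ _)
  have hbound : ∀ z ∈ sphere c s, ‖φ z‖ ≤ ε / (2 * π) / s := by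
    intro z hz
    have hzc : ‖z - c‖ = s := mem_sphere_iff_norm.mp hz
    have hzr : z ∉ closedBall c r := fun h' => by
      have := mem_closedBall_iff_norm.mp h'
      linarith [le_max_right R (r + 1)]
    have := mem_closedBall_zero_iff.mp (hr hzr)
    rw [norm_smul, hzc] at this
    rwa [le_div_iff₀ hs, mul_comm]
  calc ‖∮ z in C(c, R), φ z‖ = ‖∮ z in C(c, s), φ z‖ := by rw [hradius s (le_max_left _ _)]
    _ ≤ 2 * π * s * (ε / (2 * π) / s) :=
      circleIntegral.norm_integral_le_of_norm_le_const hs.le hbound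
    _ = 0 + ε := by field_simp; ring

theorem circleIntegral_eval_div_eval_eq_zero {c : ℂ} {R : ℝ} (hR : 0 < R) {P Q : ℂ[X]}
    (hQ : ∀ z, Q.IsRoot z → z ∈ ball c R) (hdeg : P.degree + 1 < Q.degree) :
    ∮ z in C(c, R), P.eval z / Q.eval z = 0 := by
  refine circleIntegral_eq_zero_of_tendsto_cobounded hR
    (fun z hz => P.differentiableAt.div Q.differentiableAt fun h0 => hz (hQ z h0)) ?_
  have hlt : ((X - C c) * P).degree < Q.degree := by
    rwa [degree_mul, degree_X_sub_C, add_comm]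
  simpa [mul_div_assoc] using (isLittleO_cobounded_of_degree_lt hlt).tendsto_div_nhds_zero

theorem circleIntegral_div_sub_mul_prod_eq_zero {ι : Type*} [Fintype ι] {c x : ℂ} {R : ℝ}
    (hR : 0 < R) (hx : x ∈ ball c R) {a : ι → ℂ} (haR : ∀ i, a i ∈ ball c R) {α : ι → ℕ}
    {P : ℂ[X]} (hP : P.degree < (∑ i, α i : ℕ)) :
    ∮ z in C(c, R), P.eval z / ((z - x) * ∏ i, (z - a i) ^ α i) = 0 := by
  set Q : ℂ[X] := (X - C x) * ∏ i, (X - C (a i)) ^ α i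
  have hQeval : ∀ z, Q.eval z = (z - x) * ∏ i, (z - a i) ^ α i := fun z => by
    simp [Q, eval_prod]
  have hroots : ∀ z, Q.IsRoot z → z ∈ ball c R := by
    intro z hz
    simp only [IsRoot.def, hQeval, mul_eq_zero, Finset.prod_eq_zero_iff, Finset.mem_univ,
      true_and, pow_eq_zero_iff', sub_eq_zero] at hz
    rcases hz with rfl | ⟨i, rfl, -⟩
    exacts [hx, haR i]
  have hQdeg : Q.degree = (∑ i, α i : ℕ) + 1 := by
    rw [degree_mul, degree_prod]
    simp [add_comm]
  simpa only [hQeval] using circleIntegral_eval_div_eval_eq_zero hR hroots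
    (hQdeg ▸ WithBot.add_lt_add_right WithBot.one_ne_bot hP)

theorem circleIntegral_add_prod_mul_div_sub_mul_prod {ι : Type*} [Fintype ι] {c x : ℂ} {R : ℝ}
    (hR : 0 < R) (hx : x ∈ ball c R) {a : ι → ℂ} (haR : ∀ i, a i ∈ ball c R) {α : ι → ℕ}
    {P : ℂ[X]} (hP : P.degree < (∑ i, α i : ℕ)) {g : ℂ → ℂ}
    (hg : DifferentiableOn ℂ g (closedBall c R)) :
    ∮ z in C(c, R), (P.eval z + (∏ i, (z - a i) ^ α i) * g z) /
        ((z - x) * ∏ i, (z - a i) ^ α i) = 2 * π * I * g x := by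
  have hx_ne : ∀ z ∈ sphere c R, z - x ≠ 0 := fun z hz =>
    sub_ne_zero.mpr fun hzx => (mem_ball.mp hx).ne (hzx ▸ mem_sphere.mp hz)
  have ha_ne : ∀ z ∈ sphere c R, ∏ i, (z - a i) ^ α i ≠ 0 := fun z hz =>
    Finset.prod_ne_zero_iff.mpr fun i _ => pow_ne_zero _ <|
      sub_ne_zero.mpr fun hza => (mem_ball.mp (haR i)).ne (hza ▸ mem_sphere.mp hz)
  have hsplit : Set.EqOn
      (fun z => (P.eval z + (∏ i, (z - a i) ^ α i) * g z) / ((z - x) * ∏ i, (z - a i) ^ α i))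
      (fun z => P.eval z / ((z - x) * ∏ i, (z - a i) ^ α i) + (z - x)⁻¹ • g z)
      (sphere c R) := fun z hz => by
    simp only [smul_eq_mul]
    field_simp [hx_ne z hz, ha_ne z hz]
  have hcont : ContinuousOn (fun z => (z - x) * ∏ i, (z - a i) ^ α i) (sphere c R) := by
    fun_prop
  have hint₁ : CircleIntegrable (fun z => P.eval z / ((z - x) * ∏ i, (z - a i) ^ α i)) c R :=
    (P.continuous.continuousOn.div hcont fun z hz => mul_ne_zero (hx_ne z hz) (ha_ne z hz))
      |>.circleIntegrable hR.le
  have hint₂ : CircleIntegrable (fun z => (z - x)⁻¹ • g z) c R :=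
    (((continuous_id.sub continuous_const).continuousOn.inv₀ hx_ne).smul
      (hg.continuousOn.mono sphere_subset_closedBall)).circleIntegrable hR.le
  rw [circleIntegral.integral_congr hR.le hsplit, circleIntegral.integral_add hint₁ hint₂,
    circleIntegral_div_sub_mul_prod_eq_zero hR hx haR hP, hg.circleIntegral_sub_inv_smul hx,
    zero_add, smul_eq_mul]

open Complex in
theorem hermite_interpolation_remainder_general (c : ℂ) (R : ℝ) (hR : 0 < R)
    (f : ℂ → ℂ) (hf : ∀ w ∈ Metric.closedBall c R, DifferentiableAt ℂ f w)
    (m : ℕ) (a : Fin m → ℂ) (ha : Function.Injective a)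
    (haR : ∀ i, a i ∈ Metric.ball c R)
    (α : Fin m → ℕ) (n : ℕ) (hn : n = ∑ i, α i)
    (F : Polynomial ℂ) (hdeg : F.degree < n)
    (hinterp : ∀ i, ∀ j < α i,
      iteratedDeriv j (fun w : ℂ => F.eval w) (a i) = iteratedDeriv j f (a i)) :
    ∀ x ∈ Metric.ball c R,
      F.eval x - f x =
        (1 / (2 * Real.pi * Complex.I)) *
          ∮ z in C(c, R),
            (f z * ∏ i, (x - a i) ^ (α i)) /
              ((x - z) * ∏ i, (z - a i) ^ (α i)) := by
  intro x hx
  obtain ⟨g, hg, hfFg⟩ := exists_sub_eq_prod_mul_of_iteratedDeriv_eq hf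
    (fun w _ => F.differentiableAt) ha haR fun i j hj => (hinterp i j hj).symm
  have hintegrand : (fun z => (f z * ∏ i, (x - a i) ^ α i) / ((x - z) * ∏ i, (z - a i) ^ α i)) =
      fun z => -(∏ i, (x - a i) ^ α i) *
        ((F.eval z + (∏ i, (z - a i) ^ α i) * g z) / ((z - x) * ∏ i, (z - a i) ^ α i)) := by
    funext z
    rw [← hfFg z, add_sub_cancel, ← neg_sub z x, neg_mul, div_neg, neg_mul, mul_div_assoc',
      mul_comm (f z)]
  rw [hintegrand, circleIntegral.integral_const_mul,
    circleIntegral_add_prod_mul_div_sub_mul_prod hR hx haR (hn ▸ hdeg) hg]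
  linear_combination
    -hfFg x + ((∏ i, (x - a i) ^ α i) * g x) * one_div_mul_cancel two_pi_I_ne_zero

open Complex in
/-- Hermite's interpolation remainder formula (letter of November 19, 1879):
the contour-integral representation of the error of the Hermite interpolating
polynomial `F` with distinct nodes `a i` of multiplicities `α i`. -/
theorem hermite_interpolation_remainder (c : ℂ) (R : ℝ) (hR : 0 < R)
    (f : ℂ → ℂ) (hf : ∀ w ∈ Metric.closedBall c R, DifferentiableAt ℂ f w)
    (m : ℕ) (a : Fin m → ℂ) (ha : Function.Injective a)
    (haR : ∀ i, a i ∈ Metric.ball c R)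
    (α : Fin m → ℕ) (hα : ∀ i, 0 < α i) (n : ℕ) (hn : n = ∑ i, α i)
    (F : Polynomial ℂ) (hdeg : F.degree < n)
    (hinterp : ∀ i, ∀ j < α i,
      iteratedDeriv j (fun w : ℂ => F.eval w) (a i) = iteratedDeriv j f (a i)) :
    ∀ x ∈ Metric.ball c R,
      F.eval x - f x =
        (1 / (2 * Real.pi * Complex.I)) *
          ∮ z in C(c, R),
            (f z * ∏ i, (x - a i) ^ (α i)) /
              ((x - z) * ∏ i, (z - a i) ^ (α i)) :=
  hermite_interpolation_remainder_general c R hR f hf m a ha haR α n hn F hdeg hinterp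
end

section
/- (Eisenstein's theorem.) Let f be a formal power series with rational coefficients in one variable x. Suppose f is algebraic over the integer polynomials, i.e., there exists a nonzero polynomial P = Σ_j p_j(X)·Y^j with coefficients p_j ∈ ℤ[X] such that Σ_j p_j(x)·f^j = 0 in the ring of formal power series over ℚ (where each p_j(x) is viewed as a power series via the canonical inclusion ℤ[X] → ℚ[[x]]). Then there exists a nonzero integer A such that for every natural number n, the rational number A^{n+1}·a_n is an integer, where a_n is the coefficient of x^n in f. -/
/-!
Among the polynomial relations satisfied by `f` choose one, `Q(f) = 0`, with `Q'(f) ≠ 0`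
(possible in characteristic zero), and let `e` be the order of `Q'(f)`. Write `f = g + X^(e+1) u`
with `g` a truncation of `f` and `X ∣ u`. Taylor expansion of `Q` at `g` has linear coefficient
`Q'(g) ≡ Q'(f)` modulo `X^(e+1)`, so after cancelling `X^(2e+1)` it becomes a fixed-point equation
`u = X K(u)` with `K ∈ ℚ[X][Y]`. If `A` clears the denominators of `g` and of `K`, every Picard
iterate of `v ↦ X K(v)` has `A^n` times its `n`-th coefficient integral, and these iterates
converge `X`-adically to `u`.
-/

open PowerSeries
open scoped Polynomial

local notation "ι" => Polynomial.coeToPowerSeries.ringHom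

theorem Polynomial.sub_dvd_eval₂_sub {R S : Type*} [Semiring R] [CommRing S] (φ : R →+* S)
    (x y : S) (p : R[X]) : x - y ∣ p.eval₂ φ x - p.eval₂ φ y := by
  simpa only [Polynomial.eval_map] using Polynomial.sub_dvd_eval_sub x y (p.map φ)

theorem Polynomial.eval₂_eq_add_mul_add_sq_mul {R S : Type*} [Semiring R] [CommSemiring S]
    (φ : R →+* S) (p : R[X]) (x : S) :
    p.eval₂ φ x = φ (p.coeff 0) + φ (p.coeff 1) * x + x ^ 2 * p.divX.divX.eval₂ φ x := by
  conv_lhs => rw [← p.X_mul_divX_add, ← p.divX.X_mul_divX_add]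
  simp only [Polynomial.eval₂_add, Polynomial.eval₂_mul, Polynomial.eval₂_X, Polynomial.eval₂_C,
    Polynomial.coeff_divX]
  ring

theorem Polynomial.exists_eq_X_pow_mul_C_add_X_mul {R : Type*} [Semiring R] {p : R[X]} {e : ℕ}
    (h : ∀ j < e, p.coeff j = 0) : ∃ b, p = X ^ e * (C (p.coeff e) + X * b) := by
  obtain ⟨s, rfl⟩ := Polynomial.X_pow_dvd_iff.2 h
  have h0 : (X ^ e * s).coeff e = s.coeff 0 := by simpa using s.coeff_X_pow_mul e 0
  exact ⟨s.divX, by rw [h0, add_comm, s.X_mul_divX_add]⟩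

theorem Polynomial.X_pow_dvd_coe_iff {R : Type*} [Semiring R] {p : R[X]} {n : ℕ} :
    PowerSeries.X ^ n ∣ (p : R⟦X⟧) ↔ X ^ n ∣ p := by
  simp only [PowerSeries.X_pow_dvd_iff, Polynomial.X_pow_dvd_iff, Polynomial.coeff_coe]

theorem Polynomial.exists_eval₂_eq_zero_and_eval₂_derivative_ne_zero {R S : Type*} [Semiring R]
    [IsAddTorsionFree R] [Semiring S] {φ : R →+* S} (hφ : Function.Injective φ) {x : S}
    {p : R[X]} (hp : p ≠ 0) (hx : p.eval₂ φ x = 0) :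
    ∃ q : R[X], q.eval₂ φ x = 0 ∧ (derivative q).eval₂ φ x ≠ 0 := by
  induction h : p.natDegree using Nat.strong_induction_on generalizing p with
  | _ n ih =>
  by_cases hd : (derivative p).eval₂ φ x = 0
  · have hn : p.natDegree ≠ 0 := by
      intro h0
      rw [natDegree_eq_zero] at h0
      obtain ⟨a, rfl⟩ := h0
      rw [eval₂_C, ← map_zero φ] at hx
      exact hp (by rw [hφ hx, map_zero])
    exact ih _ (h ▸ natDegree_derivative_lt hn) (mt derivative_eq_zero.1 hn) hd rfl
  · exact ⟨p, hx, hd⟩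

theorem Polynomial.exists_int_mul_coeff_coeff (K : ℚ[X][X]) :
    ∃ N : ℤ, N ≠ 0 ∧ ∀ i j, ∃ z : ℤ, (z : ℚ) = N * (K.coeff i).coeff j := by
  obtain ⟨⟨N, hN⟩, h⟩ := IsLocalization.exist_integer_multiples_of_finset (nonZeroDivisors ℤ)
    (K.support.biUnion fun i => (K.coeff i).coeffs)
  refine ⟨N, nonZeroDivisors.ne_zero hN, fun i j => ?_⟩
  by_cases hij : (K.coeff i).coeff j = 0
  · exact ⟨0, by simp [hij]⟩
  obtain ⟨z, hz⟩ := h _ (Finset.mem_biUnion.2 ⟨i, mem_support_iff.2 fun h0 => hij (by simp [h0]),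
    coeff_mem_coeffs hij⟩)
  exact ⟨z, by simpa [zsmul_eq_mul] using hz⟩

section Field

variable {k : Type*} [Field k]

/-- With `c` the coefficient of `X ^ e` in `T₁`, `X ∣ u` forces `X ^ (2e+2) ∣ T₀`; dividing
`T(X ^ (e+1) u) = 0` by `X ^ (2e+1)` then leaves `c u` as the only term without a factor `X`. -/
theorem exists_eq_X_mul_eval₂_of_eval₂_X_pow_mul_eq_zero {T : k[X][X]} {e : ℕ} {u : k⟦X⟧}
    (hT : T.eval₂ ι (X ^ (e + 1) * u) = 0) (hu : X ∣ u)
    (hlow : ∀ j < e, (T.coeff 1).coeff j = 0) (hc : (T.coeff 1).coeff e ≠ 0) :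
    ∃ K : k[X][X], u = X * K.eval₂ ι u := by
  obtain ⟨b, hb⟩ := Polynomial.exists_eq_X_pow_mul_C_add_X_mul hlow
  generalize (T.coeff 1).coeff e = c at hb hc
  have hsplit := Polynomial.eval₂_eq_add_mul_add_sq_mul ι T (X ^ (e + 1) * u)
  rw [hT, hb] at hsplit
  simp only [Polynomial.coeToPowerSeries.ringHom_apply, Polynomial.coe_mul, Polynomial.coe_pow,
    Polynomial.coe_X, Polynomial.coe_add, Polynomial.coe_C] at hsplit
  obtain ⟨v, hv⟩ := hu
  obtain ⟨a, ha⟩ : Polynomial.X ^ (2 * e + 2) ∣ T.coeff 0 := by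
    refine Polynomial.X_pow_dvd_coe_iff.1
      ⟨-((C c + X * (b : k⟦X⟧)) * v + u ^ 2 * T.divX.divX.eval₂ ι (X ^ (e + 1) * u)), ?_⟩
    linear_combination -hsplit - X ^ (2 * e + 1) * (C c + X * (b : k⟦X⟧)) * hv
  rw [ha] at hsplit
  simp only [Polynomial.coe_mul, Polynomial.coe_pow, Polynomial.coe_X] at hsplit
  have hcancel : X * (a : k⟦X⟧) + (C c + X * (b : k⟦X⟧)) * u +
      X * u ^ 2 * T.divX.divX.eval₂ ι (X ^ (e + 1) * u) = 0 := by
    refine (mul_eq_zero.1 ?_).resolve_left (pow_ne_zero (2 * e + 1) X_ne_zero)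
    linear_combination -hsplit
  have hcc : C c * C c⁻¹ = (1 : k⟦X⟧) := by rw [← map_mul, mul_inv_cancel₀ hc, map_one]
  refine ⟨-Polynomial.C (Polynomial.C c⁻¹) * (Polynomial.C a + Polynomial.C b * Polynomial.X +
    Polynomial.X ^ 2 * T.divX.divX.comp (Polynomial.C (Polynomial.X ^ (e + 1)) * Polynomial.X)), ?_⟩
  simp only [Polynomial.eval₂_mul, Polynomial.eval₂_add, Polynomial.eval₂_neg, Polynomial.eval₂_C,
    Polynomial.eval₂_X, Polynomial.eval₂_pow, Polynomial.eval₂_comp, Polynomial.coe_C,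
    Polynomial.coeToPowerSeries.ringHom_apply, Polynomial.coe_pow, Polynomial.coe_X]
  linear_combination C c⁻¹ * hcancel - u * hcc

theorem exists_eq_add_X_pow_mul_eq_X_mul_eval₂ {Q : k[X][X]} {f : k⟦X⟧}
    (hQ : Q.eval₂ ι f = 0) (hQ' : (Polynomial.derivative Q).eval₂ ι f ≠ 0) :
    ∃ (g : k[X]) (e : ℕ) (u : k⟦X⟧) (K : k[X][X]),
      f = (g : k⟦X⟧) + X ^ e * u ∧ u = X * K.eval₂ ι u := by
  classical
  set F := (Polynomial.derivative Q).eval₂ ι f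
  have hF : ∃ n, coeff n F ≠ 0 := exists_coeff_ne_zero_iff_ne_zero.2 hQ'
  set e := Nat.find hF
  set g := trunc (e + 2) f
  obtain ⟨v, hv⟩ : X ^ (e + 2) ∣ f - (g : k⟦X⟧) :=
    X_pow_dvd_iff.2 fun j hj => by simp [g, coeff_trunc, hj]
  have hf : f = (g : k⟦X⟧) + X ^ (e + 1) * (X * v) := by rw [← mul_assoc, ← pow_succ, ← hv]; ring
  have hT : (Polynomial.taylor g Q).eval₂ ι (X ^ (e + 1) * (X * v)) = 0 := by
    rwa [Polynomial.taylor_apply, Polynomial.eval₂_comp, Polynomial.eval₂_add, Polynomial.eval₂_X,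
      Polynomial.eval₂_C, Polynomial.coeToPowerSeries.ringHom_apply, add_comm, ← hf]
  have hlin : ∀ j ≤ e, ((Polynomial.taylor g Q).coeff 1).coeff j = coeff j F := by
    intro j hj
    have hdvd : X ^ (e + 1) ∣ F - ((Polynomial.taylor g Q).coeff 1 : k⟦X⟧) := by
      rw [Polynomial.taylor_coeff_one, ← Polynomial.coeToPowerSeries.ringHom_apply,
        ← Polynomial.eval₂_at_apply]
      exact ((pow_dvd_pow X (e + 1).le_succ).trans (Dvd.intro v hv.symm)).trans
        (Polynomial.sub_dvd_eval₂_sub ι f (ι g) (Polynomial.derivative Q))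
    have := X_pow_dvd_iff.1 hdvd j (by omega)
    rwa [map_sub, Polynomial.coeff_coe, sub_eq_zero, eq_comm] at this
  obtain ⟨K, hK⟩ := exists_eq_X_mul_eval₂_of_eval₂_X_pow_mul_eq_zero hT (dvd_mul_right X v)
    (fun j hj => (hlin j hj.le).trans (not_not.1 (Nat.find_min hF hj)))
    ((hlin e le_rfl).symm ▸ Nat.find_spec hF)
  exact ⟨g, e + 1, X * v, K, hf, hK⟩

end Field

noncomputable def integralRescale (A : ℤ) : Subring ℚ⟦X⟧ :=
  (map (Int.castRingHom ℚ)).range.comap (rescale (A : ℚ))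

theorem mem_integralRescale {A : ℤ} {f : ℚ⟦X⟧} :
    f ∈ integralRescale A ↔ ∀ n, ∃ z : ℤ, (z : ℚ) = (A : ℚ) ^ n * coeff n f := by
  simp only [integralRescale, Subring.mem_comap, RingHom.mem_range]
  constructor
  · rintro ⟨F, hF⟩ n
    exact ⟨coeff n F, by rw [← coeff_rescale, ← hF, coeff_map, eq_intCast]⟩
  · intro h
    choose z hz using h
    exact ⟨PowerSeries.mk z, by ext n; simp [hz]⟩

theorem C_mul_mem_integralRescale_iff {A : ℤ} {f : ℚ⟦X⟧} :
    C (A : ℚ) * f ∈ integralRescale A ↔ ∀ n, ∃ z : ℤ, (z : ℚ) = (A : ℚ) ^ (n + 1) * coeff n f := by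
  simp only [mem_integralRescale, coeff_C_mul, ← mul_assoc, ← pow_succ]

theorem C_mul_mem_integralRescale {A N : ℤ} {f : ℚ⟦X⟧} (hN : N ∣ A)
    (h : ∀ n, ∃ z : ℤ, (z : ℚ) = N * coeff n f) : C (A : ℚ) * f ∈ integralRescale A := by
  obtain ⟨D, rfl⟩ := hN
  refine mem_integralRescale.2 fun n => ?_
  obtain ⟨z, hz⟩ := h n
  exact ⟨(N * D) ^ n * D * z, by rw [coeff_C_mul]; push_cast; rw [hz]; ring⟩

theorem X_mul_mem_integralRescale {A : ℤ} {f : ℚ⟦X⟧} (h : C (A : ℚ) * f ∈ integralRescale A) :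
    X * f ∈ integralRescale A := by
  refine mem_integralRescale.2 fun n => ?_
  cases n with
  | zero => exact ⟨0, by simp⟩
  | succ n =>
    obtain ⟨z, hz⟩ := mem_integralRescale.1 h n
    exact ⟨z, by rw [hz, coeff_succ_X_mul, coeff_C_mul]; ring⟩

theorem C_mem_integralRescale (A : ℤ) : C (A : ℚ) ∈ integralRescale A := by
  simpa only [map_intCast] using intCast_mem (integralRescale A) A

theorem X_mem_integralRescale (A : ℤ) : X ∈ integralRescale A := by
  simpa only [mul_one] using
    X_mul_mem_integralRescale (f := 1) (by simpa only [mul_one] using C_mem_integralRescale A)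

/-- The Picard iterates `t₀ = 0`, `tₙ₊₁ = X K(tₙ)` stay in the subring and agree with `u`
modulo `X ^ n`. -/
theorem mem_integralRescale_of_eq_X_mul_eval₂ {A : ℤ} {K : ℚ[X][X]} {u : ℚ⟦X⟧}
    (hK : ∀ k, C (A : ℚ) * (K.coeff k : ℚ⟦X⟧) ∈ integralRescale A)
    (hu : u = X * K.eval₂ ι u) : u ∈ integralRescale A := by
  have picard : ∀ n, ∃ t ∈ integralRescale A, X ^ n ∣ u - t := by
    intro n
    induction n with
    | zero => exact ⟨0, zero_mem _, by simp⟩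
    | succ n ih =>
      obtain ⟨t, ht, hut⟩ := ih
      refine ⟨X * K.eval₂ ι t, X_mul_mem_integralRescale ?_, ?_⟩
      · rw [Polynomial.eval₂_eq_sum_range, Finset.mul_sum]
        refine Subring.sum_mem _ fun k _ => ?_
        rw [← mul_assoc]
        exact mul_mem (hK k) (pow_mem ht k)
      · rw [pow_succ']
        nth_rw 1 [hu]
        rw [← mul_sub]
        exact mul_dvd_mul_left X (hut.trans (Polynomial.sub_dvd_eval₂_sub ι u t K))
  refine mem_integralRescale.2 fun n => ?_
  obtain ⟨t, ht, hut⟩ := picard (n + 1)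
  obtain ⟨z, hz⟩ := mem_integralRescale.1 ht n
  have hcoeff := X_pow_dvd_iff.1 hut n n.lt_succ_self
  rw [map_sub, sub_eq_zero] at hcoeff
  exact ⟨z, by rw [hz, hcoeff]⟩

/-- Eisenstein's theorem (the subject of Gomes Teixeira's paper praised in
Hermite's letters of October 20, 1885 and January 26, 1886): if a formal power
series `f` with rational coefficients satisfies a nontrivial polynomial equation
`∑_j p_j(x) f^j = 0` with `p_j ∈ ℤ[X]`, then there is a nonzero integer `A` such
that `A^(n+1) a_n` is an integer for every `n`, where `a_n` is the `n`-th
coefficient of `f`. -/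
theorem eisenstein_theorem (f : PowerSeries ℚ)
    (P : Polynomial (Polynomial ℤ)) (hP : P ≠ 0)
    (hroot : Polynomial.eval₂
      ((Polynomial.coeToPowerSeries.ringHom : Polynomial ℚ →+* PowerSeries ℚ).comp
        (Polynomial.mapRingHom (Int.castRingHom ℚ))) f P = 0) :
    ∃ A : ℤ, A ≠ 0 ∧ ∀ n : ℕ, ∃ z : ℤ,
      (z : ℚ) = (A : ℚ) ^ (n + 1) * PowerSeries.coeff n f := by
  have hQ : P.map (Polynomial.mapRingHom (Int.castRingHom ℚ)) ≠ 0 :=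
    (Polynomial.map_ne_zero_iff (Polynomial.map_injective _ Int.cast_injective)).2 hP
  obtain ⟨Q, hQf, hQ'f⟩ := Polynomial.exists_eval₂_eq_zero_and_eval₂_derivative_ne_zero
    (φ := ι) (Polynomial.coe_injective ℚ) hQ (by rwa [Polynomial.eval₂_map])
  obtain ⟨g, e, u, K, rfl, hu⟩ := exists_eq_add_X_pow_mul_eq_X_mul_eval₂ hQf hQ'f
  obtain ⟨N₁, hN₁, hgN⟩ := Polynomial.exists_int_mul_coeff_coeff (Polynomial.C g)
  obtain ⟨N₂, hN₂, hKN⟩ := Polynomial.exists_int_mul_coeff_coeff K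
  refine ⟨N₁ * N₂, mul_ne_zero hN₁ hN₂, C_mul_mem_integralRescale_iff.1 ?_⟩
  have hg_mem : C ((N₁ * N₂ : ℤ) : ℚ) * (g : ℚ⟦X⟧) ∈ integralRescale (N₁ * N₂) :=
    C_mul_mem_integralRescale (dvd_mul_right N₁ N₂) fun n => by
      simpa [Polynomial.coeff_coe] using hgN 0 n
  have hu_mem : u ∈ integralRescale (N₁ * N₂) :=
    mem_integralRescale_of_eq_X_mul_eval₂ (fun k => C_mul_mem_integralRescale
      (dvd_mul_left N₂ N₁) fun n => by simpa [Polynomial.coeff_coe] using hKN k n) hu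
  rw [mul_add, mul_left_comm]
  exact add_mem hg_mem (mul_mem (pow_mem (X_mem_integralRescale _) e)
    (mul_mem (C_mem_integralRescale _) hu_mem))
end
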